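/- arXiv:2603.26315 — 10 statements merged into one kernel-verified Lean document; each statement's English description precedes it below -/
import Mathlib

section
/- Let p be a prime, r ≥ 1 an integer, and G a finite group whose order is not divisible by p. Suppose there are an integer k ≥ 1 and positive integers n_1, …, n_k and m_1, …, m_k together with a ring isomorphism between the group algebra F_pG and the product ∏_{i=1}^{k} M_{n_i}(GF(p^{m_i})), where GF(p^{m_i}) is the finite field with p^{m_i} elements. Then for every family h_1, …, h_k of polynomials with h_i ∈ (Z_{p^r})[X] a basic irreducible polynomial of degree m_i, there is a ring isomorphism between the group algebra Z_{p^r}G and the product ∏_{i=1}^{k} M_{n_i}((Z_{p^r})[X] / ⟨h_i⟩), where ⟨h_i⟩ denotes the ideal generated by h_i. -/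
/-!
Reduction modulo `p` maps `C = ∏ᵢ M_{nᵢ}(Z_{p^r}[X]/⟨hᵢ⟩)` onto `∏ᵢ M_{nᵢ}(GF(p^{mᵢ})) ≅ F_p G`,
with kernel `pC`, which is nilpotent. Units of `C` congruent to `1` modulo `p` have `p`-power order,
so, as `p ∤ |G|`, Schur–Zassenhaus lifts `G → (F_p G)ˣ` to a homomorphism `G → Cˣ`. The induced
algebra map `Z_{p^r} G → C` is surjective modulo `p`, hence surjective by successive approximation
modulo powers of `p`, and it is bijective because both rings have `p^{r|G|}` elements.
-/

open Polynomial

theorem one_add_natCast_mul_pow_pow_eq_one {A : Type*} [Ring A] {p r : ℕ}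
    (hA : (p : A) ^ r = 0) (y : A) : (1 + p * y) ^ p ^ r = 1 := by
  -- `A` need not be commutative: prove `p ^ (r + 1) ∣ (1 + p X) ^ p ^ r - 1` in `ℤ[X]` and
  -- evaluate at `y`.
  obtain ⟨q, hq⟩ :=
    dvd_sub_pow_of_dvd_sub (R := ℤ[X]) (p := p) (a := 1 + (p : ℤ[X]) * X) (b := 1) (by simp) r
  have heval := congrArg (aeval y) hq
  simp only [map_sub, map_pow, map_add, map_one, map_mul, map_natCast, aeval_X, one_pow] at heval
  rw [← sub_eq_zero, heval, pow_succ, hA, zero_mul, zero_mul]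

section Reduction

variable {C D : Type*} [Ring C] [Ring D] {p r : ℕ} {π : C →+* D}

theorem units_map_surjective_of_ker_natCast_dvd [Finite C] (hπ : Function.Surjective π)
    (hC : (p : C) ^ r = 0) (hker : ∀ x, π x = 0 → (p : C) ∣ x) :
    Function.Surjective (Units.map (π : C →* D)) := by
  intro d
  obtain ⟨b, hb⟩ := hπ d
  obtain ⟨b', hb'⟩ := hπ ↑d⁻¹
  obtain ⟨y, hy⟩ := hker (b * b' - 1) (by simp [hb, hb'])
  have hunit : IsUnit (b * b') := by
    rw [← sub_add_cancel (b * b') 1, hy, add_comm]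
    exact ((Nat.cast_commute p y).isNilpotent_mul_right ⟨r, hC⟩).isUnit_one_add
  obtain ⟨u, rfl⟩ := isUnit_of_mul_isUnit_left hunit
  exact ⟨u, Units.ext hb⟩

theorem isPGroup_ker_units_map (hC : (p : C) ^ r = 0) (hker : ∀ x, π x = 0 → (p : C) ∣ x) :
    IsPGroup p (Units.map (π : C →* D)).ker := by
  rintro ⟨u, hu⟩
  obtain ⟨y, hy⟩ := hker (u - 1) (by simpa [sub_eq_zero, Units.ext_iff] using hu)
  refine ⟨r, Subtype.ext (Units.ext ?_)⟩
  simpa [← hy] using one_add_natCast_mul_pow_pow_eq_one hC y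

theorem surjective_of_surjective_comp_of_ker_natCast_dvd {A : Type*} [Semiring A] {f : A →+* C}
    (hf : Function.Surjective (π.comp f)) (hC : (p : C) ^ r = 0)
    (hker : ∀ x, π x = 0 → (p : C) ∣ x) : Function.Surjective f := by
  have approx : ∀ j x, ∃ a y, x = f a + (p : C) ^ j * y := by
    intro j
    induction j with
    | zero => exact fun x ↦ ⟨0, x, by simp⟩
    | succ j ih =>
      intro x
      obtain ⟨a, y, rfl⟩ := ih x
      obtain ⟨b, hb⟩ := hf (π y)
      obtain ⟨z, hz⟩ := hker (y - f b) (by simp [← hb])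
      refine ⟨a + p ^ j * b, z, ?_⟩
      rw [map_add, map_mul, map_pow, map_natCast, pow_succ, mul_assoc, ← hz, add_assoc,
        ← mul_add, add_sub_cancel]
  intro x
  obtain ⟨a, y, hx⟩ := approx r x
  exact ⟨a, by rw [hx, hC, zero_mul, add_zero]⟩

end Reduction

theorem MonoidHom.exists_comp_eq_of_coprime {U V G : Type*} [Group U] [Group V] [Group G]
    (f : U →* V) (hf : Function.Surjective f) (hcop : (Nat.card f.ker).Coprime (Nat.card G))
    (ρ : G →* V) : ∃ τ : G →* U, f.comp τ = ρ := by
  -- `τ` is read off from a complement of `ker pr` in the fibre product `E = U ×_V G`.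
  let E : Subgroup (U × G) := (f.comp (MonoidHom.fst U G)).eqLocus (ρ.comp (MonoidHom.snd U G))
  let pr : E →* G := (MonoidHom.snd U G).comp E.subtype
  have hpr : Function.Surjective pr := fun g ↦
    let ⟨u, hu⟩ := hf (ρ g)
    ⟨⟨(u, g), hu⟩, rfl⟩
  have hker : Nat.card pr.ker ∣ Nat.card f.ker := by
    refine Subgroup.card_dvd_of_injective
      (((MonoidHom.fst U G).comp (E.subtype.comp pr.ker.subtype)).codRestrict f.ker ?_) ?_
    · rintro ⟨⟨⟨u, g⟩, hug : f u = ρ g⟩, rfl : g = 1⟩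
      simpa using hug
    · intro x y hxy
      exact Subtype.ext <| Subtype.ext <| Prod.ext (congrArg Subtype.val hxy) (x.2.trans y.2.symm)
  have hindex : pr.ker.index = Nat.card G := by
    rw [Subgroup.index_ker, MonoidHom.range_eq_top.mpr hpr, Subgroup.card_top]
  obtain ⟨K, hK⟩ := Subgroup.exists_left_complement'_of_coprime
    (hindex ▸ hcop.coprime_dvd_left hker)
  let e := QuotientGroup.quotientKerEquivOfSurjective pr hpr
  let σ : G ≃* K := e.symm.trans hK.QuotientMulEquiv
  refine ⟨(MonoidHom.fst U G).comp (E.subtype.comp (K.subtype.comp σ.toMonoidHom)), ?_⟩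
  ext g
  have hσ : pr (σ g) = g := by
    conv_rhs => rw [← e.apply_symm_apply g, ← hK.quotientGroupMk_leftQuotientEquiv (e.symm g)]
    rfl
  conv_rhs => rw [← hσ]
  exact (σ g : E).2

theorem exists_surjective_ringHom_monoidAlgebra_zmod_pow {p r : ℕ} [Fact p.Prime] (hr : r ≠ 0)
    {G C D : Type*} [Group G] (hG : ¬ p ∣ Nat.card G)
    [Ring C] [Finite C] [Algebra (ZMod (p ^ r)) C] [Ring D]
    (π : C →+* D) (hπ : Function.Surjective π) (hker : ∀ x, π x = 0 → (p : C) ∣ x)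
    (Ψ : MonoidAlgebra (ZMod p) G ≃+* D) :
    ∃ Φ : MonoidAlgebra (ZMod (p ^ r)) G →+* C, Function.Surjective Φ := by
  have hC : (p : C) ^ r = 0 := by
    rw [← Nat.cast_pow, ← map_natCast (algebraMap (ZMod (p ^ r)) C), ZMod.natCast_self,
      map_zero]
  have hcop : (Nat.card (Units.map (π : C →* D)).ker).Coprime (Nat.card G) := by
    obtain ⟨n, hn⟩ := IsPGroup.iff_card.mp (isPGroup_ker_units_map hC hker)
    exact hn ▸ ((Nat.Prime.coprime_iff_not_dvd Fact.out).2 hG).pow_left n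
  let ρ : G →* Dˣ :=
    ((Ψ : MonoidAlgebra (ZMod p) G →* D).comp (MonoidAlgebra.of (ZMod p) G)).toHomUnits
  obtain ⟨τ, hτ⟩ := (Units.map (π : C →* D)).exists_comp_eq_of_coprime
    (units_map_surjective_of_ker_natCast_dvd hπ hC hker) hcop ρ
  let Φ := (MonoidAlgebra.lift (ZMod (p ^ r)) C G ((Units.coeHom C).comp τ)).toRingHom
  have hcomm : π.comp Φ = (Ψ : MonoidAlgebra (ZMod p) G →+* D).comp
      (MonoidAlgebra.mapRingHom G (ZMod.castHom (dvd_pow_self p hr) (ZMod p))) := by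
    refine MonoidAlgebra.ringHom_ext' (RingHom.ext_zmod _ _) (MonoidHom.ext fun g ↦ ?_)
    have := congrArg Units.val (DFunLike.congr_fun hτ g)
    simpa [Φ, ρ, ZMod.cast_one (dvd_pow_self p hr)] using this
  refine ⟨Φ, surjective_of_surjective_comp_of_ker_natCast_dvd (π := π) ?_ hC hker⟩
  rw [hcomm, RingHom.coe_comp, RingEquiv.coe_toRingHom, MonoidAlgebra.coe_mapRingHom]
  exact Ψ.surjective.comp
    (MonoidAlgebra.map_surjective _ (ZMod.castHom_surjective (dvd_pow_self p hr)))

theorem ZMod.ker_castHom {m n : ℕ} [NeZero n] (h : m ∣ n) :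
    RingHom.ker (ZMod.castHom h (ZMod m)) = Ideal.span {(m : ZMod n)} := by
  refine le_antisymm (fun a ha ↦ ?_) (Ideal.span_le.mpr <| by simp)
  rw [RingHom.mem_ker, ← ZMod.natCast_zmod_val a, map_natCast, ZMod.natCast_eq_zero_iff] at ha
  obtain ⟨t, ht⟩ := ha
  refine Ideal.mem_span_singleton'.mpr ⟨t, ?_⟩
  rw [← ZMod.natCast_zmod_val a, ht, Nat.cast_mul, mul_comm]

namespace AdjoinRoot

variable {R S : Type*} [CommRing R] [CommRing S] (f : R →+* S) {p : R[X]} {q : S[X]}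

theorem map_mk (h : q ∣ p.map f) (g : R[X]) : map f p q h (mk p g) = mk q (g.map f) := by
  rw [map, lift_mk, ← eval₂_map, ← algebraMap_eq, ← aeval_def, aeval_eq]

theorem map_surjective (hf : Function.Surjective f) (h : q ∣ p.map f) :
    Function.Surjective (map f p q h) := by
  intro y
  obtain ⟨g, rfl⟩ := mk_surjective y
  obtain ⟨g, rfl⟩ := Polynomial.map_surjective f hf g
  exact ⟨mk p g, map_mk f h g⟩

theorem ker_map_map (hf : Function.Surjective f) :
    RingHom.ker (map f p (p.map f) dvd_rfl) = (RingHom.ker f).map (of p) := by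
  refine le_antisymm (fun x hx ↦ ?_) (Ideal.map_le_iff_le_comap.mpr fun a ha ↦ ?_)
  · obtain ⟨g, rfl⟩ := mk_surjective x
    rw [RingHom.mem_ker, map_mk, mk_eq_zero] at hx
    obtain ⟨u, hu⟩ := hx
    obtain ⟨v, rfl⟩ := Polynomial.map_surjective f hf u
    have hker : g - p * v ∈ (RingHom.ker f).map (C : R →+* R[X]) := by
      rw [← ker_mapRingHom, RingHom.mem_ker, map_sub, map_mul, coe_mapRingHom, hu, sub_self]
    have : mk p g = mk p (g - p * v) := by simp
    rw [this, of, ← Ideal.map_map]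
    exact Ideal.mem_map_of_mem _ hker
  · simp [RingHom.mem_ker.mp ha]

end AdjoinRoot

theorem AdjoinRoot.natCard_of_monic {R : Type*} [CommRing R] {q : R[X]} (hq : q.Monic) :
    Nat.card (AdjoinRoot q) = Nat.card R ^ q.natDegree := by
  rw [Nat.card_congr (AdjoinRoot.powerBasis' hq).basis.equivFun.toEquiv, Nat.card_fun]
  simp

theorem exists_surjective_adjoinRoot_galoisField {p r m : ℕ} [Fact p.Prime] (hr : r ≠ 0)
    {h : (ZMod (p ^ r))[X]} (hmonic : h.Monic) (hdeg : h.natDegree = m)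
    (hirr : Irreducible (h.map (ZMod.castHom (dvd_pow_self p hr) (ZMod p)))) :
    ∃ φ : AdjoinRoot h →+* GaloisField p m,
      Function.Surjective φ ∧ ∀ x, φ x = 0 → (p : AdjoinRoot h) ∣ x := by
  set c := ZMod.castHom (dvd_pow_self p hr) (ZMod p)
  have : Fact (Irreducible (h.map c)) := ⟨hirr⟩
  have hcard : Nat.card (AdjoinRoot (h.map c)) = p ^ m := by
    rw [AdjoinRoot.natCard_of_monic (hmonic.map c), Nat.card_zmod, hmonic.natDegree_map, hdeg]
  let ε := (GaloisField.algEquivGaloisField p m hcard).toRingEquiv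
  have hc : Function.Surjective c := ZMod.castHom_surjective _
  refine ⟨(ε : _ →+* _).comp (AdjoinRoot.map c h _ dvd_rfl),
    ε.surjective.comp (AdjoinRoot.map_surjective c hc _), fun x hx ↦ ?_⟩
  have hx : x ∈ RingHom.ker (AdjoinRoot.map c h _ dvd_rfl) := by simpa using hx
  rwa [AdjoinRoot.ker_map_map c hc, ZMod.ker_castHom, Ideal.map_span, Set.image_singleton,
    map_natCast, Ideal.mem_span_singleton] at hx

section MatrixPiMap

variable {ι : Type*} {n : ι → Type*} [∀ i, Fintype (n i)] [∀ i, DecidableEq (n i)]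
  {A B : ι → Type*} [∀ i, Ring (A i)] [∀ i, Ring (B i)]

variable (n) in
def matrixPiMap (f : ∀ i, A i →+* B i) :
    (Π i, Matrix (n i) (n i) (A i)) →+* Π i, Matrix (n i) (n i) (B i) :=
  RingHom.pi fun i ↦ (f i).mapMatrix.comp (Pi.evalRingHom _ i)

theorem matrixPiMap_surjective {f : ∀ i, A i →+* B i} (hf : ∀ i, Function.Surjective (f i)) :
    Function.Surjective (matrixPiMap n f) :=
  .piMap fun i ↦ .piMap fun _ ↦ .piMap fun _ ↦ hf i

theorem natCast_dvd_of_matrixPiMap_eq_zero {p : ℕ} {f : ∀ i, A i →+* B i}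
    (hf : ∀ i x, f i x = 0 → (p : A i) ∣ x) {x : Π i, Matrix (n i) (n i) (A i)}
    (hx : matrixPiMap n f x = 0) : (p : Π i, Matrix (n i) (n i) (A i)) ∣ x := by
  choose y hy using fun i a b ↦ hf i (x i a b) (congrFun (congrFun (congrFun hx i) a) b)
  refine ⟨fun i ↦ Matrix.of (y i), ?_⟩
  rw [← nsmul_eq_mul]
  funext i
  ext a b
  simp [hy, nsmul_eq_mul]

end MatrixPiMap

theorem Matrix.natCard {m n α : Type*} [Finite m] [Finite n] :
    Nat.card (Matrix m n α) = Nat.card α ^ (Nat.card m * Nat.card n) := by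
  simp only [Matrix, Nat.card_fun, ← pow_mul, mul_comm]

theorem natCard_pi_matrix_eq_pow {ι : Type*} [Fintype ι] {n : ι → Type*} [∀ i, Finite (n i)]
    {S T : ι → Type*} {r : ℕ} (h : ∀ i, Nat.card (S i) = Nat.card (T i) ^ r) :
    Nat.card (Π i, Matrix (n i) (n i) (S i)) = Nat.card (Π i, Matrix (n i) (n i) (T i)) ^ r := by
  simp only [Nat.card_pi, Matrix.natCard, h, ← Finset.prod_pow, ← pow_mul, mul_comm]

theorem MonoidAlgebra.natCard {A G : Type*} [Semiring A] [Finite G] :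
    Nat.card (MonoidAlgebra A G) = Nat.card A ^ Nat.card G := by
  rw [Nat.card_congr (MonoidAlgebra.coeffEquiv.trans Finsupp.equivFunOnFinite), Nat.card_fun]

theorem zmod_pow_groupRing_decomposition_general (p r : ℕ) [Fact p.Prime] (hr : 1 ≤ r)
    (G : Type*) [Group G] [Fintype G] (hG : ¬ p ∣ Fintype.card G)
    (k : ℕ) (n m : Fin k → ℕ) (hm : ∀ i, 1 ≤ m i)
    (hdec : Nonempty (MonoidAlgebra (ZMod p) G ≃+*
      Π i : Fin k, Matrix (Fin (n i)) (Fin (n i)) (GaloisField p (m i))))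
    (h : Fin k → Polynomial (ZMod (p ^ r)))
    (hmonic : ∀ i, (h i).Monic)
    (hdeg : ∀ i, (h i).natDegree = m i)
    (hirr : ∀ i, Irreducible ((h i).map
      (ZMod.castHom (dvd_pow_self p (Nat.one_le_iff_ne_zero.mp hr)) (ZMod p)))) :
    Nonempty (MonoidAlgebra (ZMod (p ^ r)) G ≃+*
      Π i : Fin k, Matrix (Fin (n i)) (Fin (n i))
        (Polynomial (ZMod (p ^ r)) ⧸ Ideal.span {h i})) := by
  obtain ⟨Ψ⟩ := hdec
  have hr₀ : r ≠ 0 := Nat.one_le_iff_ne_zero.mp hr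
  choose φ hφ hφker using fun i ↦
    exists_surjective_adjoinRoot_galoisField hr₀ (hmonic i) (hdeg i) (hirr i)
  have hcard : Nat.card (Π i, Matrix (Fin (n i)) (Fin (n i)) (AdjoinRoot (h i))) =
      Nat.card (MonoidAlgebra (ZMod (p ^ r)) G) := by
    rw [natCard_pi_matrix_eq_pow fun i ↦ ?_, ← Nat.card_congr Ψ.toEquiv, MonoidAlgebra.natCard,
      MonoidAlgebra.natCard, Nat.card_zmod, Nat.card_zmod, ← pow_mul, ← pow_mul, mul_comm]
    rw [AdjoinRoot.natCard_of_monic (hmonic i), hdeg, Nat.card_zmod,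
      GaloisField.card p (m i) (Nat.one_le_iff_ne_zero.mp (hm i)), ← pow_mul, ← pow_mul, mul_comm]
  have : Finite (MonoidAlgebra (ZMod (p ^ r)) G) := Nat.finite_of_card_ne_zero <| by
    simp [MonoidAlgebra.natCard, (Fact.out : p.Prime).ne_zero]
  have : Finite (Π i, Matrix (Fin (n i)) (Fin (n i)) (AdjoinRoot (h i))) :=
    Nat.finite_of_card_ne_zero (hcard ▸ Nat.card_pos.ne')
  obtain ⟨Φ, hΦ⟩ := exists_surjective_ringHom_monoidAlgebra_zmod_pow hr₀
    (Nat.card_eq_fintype_card (α := G) ▸ hG) (matrixPiMap _ φ) (matrixPiMap_surjective hφ)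
    (fun _ ↦ natCast_dvd_of_matrixPiMap_eq_zero hφker) Ψ
  exact ⟨.ofBijective Φ ((Nat.bijective_iff_surjective_and_card Φ).mpr ⟨hΦ, hcard.symm⟩)⟩

/-- if `F_p G ≅ ∏ i, M_{n i}(GF(p^{m i}))`, then for any family of
basic irreducible polynomials `h i` of degree `m i` over `Z_{p^r}`,
`Z_{p^r} G ≅ ∏ i, M_{n i}((Z_{p^r})[X]/⟨h i⟩)`. -/
theorem zmod_pow_groupRing_decomposition (p r : ℕ) [Fact p.Prime] (hr : 1 ≤ r)
    (G : Type*) [Group G] [Fintype G] (hG : ¬ p ∣ Fintype.card G)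
    (k : ℕ) (hk : 1 ≤ k) (n m : Fin k → ℕ) (hn : ∀ i, 1 ≤ n i) (hm : ∀ i, 1 ≤ m i)
    (hdec : Nonempty (MonoidAlgebra (ZMod p) G ≃+*
      Π i : Fin k, Matrix (Fin (n i)) (Fin (n i)) (GaloisField p (m i))))
    (h : Fin k → Polynomial (ZMod (p ^ r)))
    (hmonic : ∀ i, (h i).Monic)
    (hdeg : ∀ i, (h i).natDegree = m i)
    (hirr : ∀ i, Irreducible ((h i).map
      (ZMod.castHom (dvd_pow_self p (Nat.one_le_iff_ne_zero.mp hr)) (ZMod p)))) :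
    Nonempty (MonoidAlgebra (ZMod (p ^ r)) G ≃+*
      Π i : Fin k, Matrix (Fin (n i)) (Fin (n i))
        (Polynomial (ZMod (p ^ r)) ⧸ Ideal.span {h i})) :=
  zmod_pow_groupRing_decomposition_general p r hr G hG k n m hm hdec h hmonic hdeg hirr
end

section
/- Let p be an odd prime, r ≥ 1 an integer, and G a finite group. Let u ∈ Z_{p^r}G be such that its reduction modulo p is a unit of F_pG of (multiplicative) order l. Suppose k is a positive integer such that u^l − 1 lies in the ideal of Z_{p^r}G generated by p^k but u^l − 1 does not lie in the ideal generated by p^{k+1}. Then u is a unit of Z_{p^r}G and the order of u in the unit group of Z_{p^r}G is l · p^{r−k}. -/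
/-- The reduction-modulo-`p` ring homomorphism
`ZMod (p ^ r) G → ZMod p G`, induced coefficientwise by the natural
surjection `ZMod (p ^ r) → ZMod p`. -/
noncomputable def modpReduction (p r : ℕ) (hr : r ≠ 0) (G : Type*) [Group G] :
    MonoidAlgebra (ZMod (p ^ r)) G →+* MonoidAlgebra (ZMod p) G :=
  MonoidAlgebra.liftNCRingHom
    (MonoidAlgebra.singleOneRingHom.comp (ZMod.castHom (dvd_pow_self p hr) (ZMod p)))
    (MonoidAlgebra.of (ZMod p) G)
    (fun _ _ => MonoidAlgebra.single_one_comm _ _)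

/-!
Write `u ^ l = 1 + p ^ k * a`; the hypothesis `u ^ l - 1 ∉ (p ^ (k + 1))` says `p ∤ a`.
For an odd prime `p` and `k ≥ 1` the binomial theorem gives
`(1 + p ^ k * x) ^ p = 1 + p ^ (k + 1) * (x + p * y)`, so
`(u ^ l) ^ (p ^ j) = 1 + p ^ (k + j) * (a + p * z)`. As `p ^ r = 0`, this is `1` for `j = r - k`,
while for `j = r - k - 1` it is `1 + p ^ (r - 1) * a ≠ 1`: on the free `ZMod (p ^ r)`-module
`ZMod (p ^ r) G` the kernel of multiplication by `p ^ (r - 1)` is `p • ZMod (p ^ r) G`.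
Hence `u ^ l` has order `p ^ (r - k)`, and `l ∣ orderOf u` because reduction mod `p` is a ring
homomorphism.
-/
open Polynomial in
theorem exists_one_add_natCast_pow_mul_pow_prime_pow_eq {A : Type*} [Ring A] {p m : ℕ}
    (hp : p.Prime) (hpm : m + 2 ≤ p * m) (x : A) (n : ℕ) :
    ∃ y : A, (1 + (p : A) ^ m * x) ^ p ^ n = 1 + (p : A) ^ n * (p : A) ^ m * (x + p * y) := by
  -- Mathlib proves the identity in commutative rings; prove it in `ℤ[X]` and evaluate at `x`.
  obtain ⟨Y, hY⟩ := ZMod.exists_one_add_mul_pow_prime_pow_eq (R := ℤ[X]) (u := (p : ℤ[X]) ^ m)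
    (v := p) hp (dvd_pow_self _ (by rintro rfl; omega))
    (by rw [← pow_succ', ← pow_succ, ← pow_mul, mul_comm]; exact pow_dvd_pow _ hpm) X n
  exact ⟨aeval x Y, by simpa using congrArg (aeval x) hY⟩

theorem Ideal.mem_span_natCast_pow_iff_dvd {A : Type*} [Ring A] (p k : ℕ) (x : A) :
    x ∈ Ideal.span {(p : A) ^ k} ↔ (p : A) ^ k ∣ x := by
  rw [Ideal.mem_span_singleton']
  exact exists_congr fun a => by rw [← ((Nat.cast_commute p a).pow_left k).eq, eq_comm]

theorem ZMod.natCast_dvd_of_pow_sub_one_mul_eq_zero {p r : ℕ} (hp : p ≠ 0) {c : ZMod (p ^ r)}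
    (h : (p : ZMod (p ^ r)) ^ (r - 1) * c = 0) : (p : ZMod (p ^ r)) ∣ c := by
  cases r with
  | zero =>
    rw [Nat.zero_sub, pow_zero (p : ZMod (p ^ 0)), one_mul] at h
    exact ⟨0, by rw [h, mul_zero]⟩
  | succ r =>
    have : NeZero (p ^ (r + 1)) := ⟨pow_ne_zero _ hp⟩
    rw [← ZMod.natCast_zmod_val c, add_tsub_cancel_right, ← Nat.cast_pow, ← Nat.cast_mul,
      ZMod.natCast_eq_zero_iff] at h
    have h' : p ^ r * p ∣ p ^ r * c.val := by rwa [← pow_succ]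
    rw [← ZMod.natCast_zmod_val c]
    exact Nat.cast_dvd_cast (Nat.dvd_of_mul_dvd_mul_left (pow_pos (Nat.pos_of_ne_zero hp) r) h')

namespace MonoidAlgebra

theorem exists_eq_smul_of_forall_dvd_coeff {R M : Type*} [Semiring R] (c : R)
    (x : MonoidAlgebra R M) (h : ∀ m, c ∣ x.coeff m) : ∃ y : MonoidAlgebra R M, x = c • y := by
  classical
  choose d hd using h
  refine ⟨ofCoeff (∑ m ∈ x.coeff.support, Finsupp.single m (d m)), ?_⟩
  ext1
  simp only [coeff_smul, Finset.smul_sum, Finsupp.smul_single, smul_eq_mul, ← hd]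
  exact (Finsupp.sum_single x.coeff).symm

variable {G : Type*} [Monoid G]

theorem natCast_pow_mul_eq_smul {R : Type*} [CommSemiring R] (p n : ℕ) (x : MonoidAlgebra R G) :
    (p : MonoidAlgebra R G) ^ n * x = ((p : R) ^ n) • x := by
  rw [← map_natCast (algebraMap R _) p, ← map_pow, Algebra.smul_def]

variable {p r : ℕ}

theorem natCast_pow_eq_zero : (p : MonoidAlgebra (ZMod (p ^ r)) G) ^ r = 0 := by
  rw [← mul_one ((p : MonoidAlgebra (ZMod (p ^ r)) G) ^ r), natCast_pow_mul_eq_smul,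
    ← Nat.cast_pow, ZMod.natCast_self, zero_smul]

theorem natCast_dvd_of_pow_sub_one_mul_eq_zero (hp : p ≠ 0) {x : MonoidAlgebra (ZMod (p ^ r)) G}
    (h : (p : MonoidAlgebra (ZMod (p ^ r)) G) ^ (r - 1) * x = 0) :
    (p : MonoidAlgebra (ZMod (p ^ r)) G) ∣ x := by
  rw [natCast_pow_mul_eq_smul] at h
  obtain ⟨y, rfl⟩ := exists_eq_smul_of_forall_dvd_coeff (p : ZMod (p ^ r)) x fun g =>
    ZMod.natCast_dvd_of_pow_sub_one_mul_eq_zero hp (by simpa using congrArg (coeff · g) h)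
  refine ⟨y, ?_⟩
  rw [← pow_one (p : MonoidAlgebra (ZMod (p ^ r)) G), natCast_pow_mul_eq_smul, pow_one]

theorem orderOf_eq_prime_pow_of_sub_one_mem {k : ℕ} (hp : p.Prime) (hpk : k + 2 ≤ p * k)
    {v : MonoidAlgebra (ZMod (p ^ r)) G}
    (hmem : v - 1 ∈ Ideal.span {(p : MonoidAlgebra (ZMod (p ^ r)) G) ^ k})
    (hnmem : v - 1 ∉ Ideal.span {(p : MonoidAlgebra (ZMod (p ^ r)) G) ^ (k + 1)}) :
    orderOf v = p ^ (r - k) := by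
  rw [Ideal.mem_span_natCast_pow_iff_dvd] at hmem hnmem
  obtain ⟨a, ha⟩ := hmem
  have hpa : ¬ (p : MonoidAlgebra (ZMod (p ^ r)) G) ∣ a := fun ⟨b, hb⟩ =>
    hnmem ⟨b, by rw [ha, hb, pow_succ, mul_assoc]⟩
  have hkr : k < r := by
    by_contra! hrk
    exact hnmem ⟨0, by rw [ha, ← Nat.sub_add_cancel hrk, pow_add, natCast_pow_eq_zero]; simp⟩
  obtain ⟨n, hn⟩ : ∃ n, r - k = n + 1 := ⟨r - k - 1, by omega⟩
  have hv : v = 1 + (p : MonoidAlgebra (ZMod (p ^ r)) G) ^ k * a := by rw [← ha]; abel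
  have hpow := exists_one_add_natCast_pow_mul_pow_prime_pow_eq hp hpk a
  have := Fact.mk hp
  rw [hn]
  apply orderOf_eq_prime_pow
  · obtain ⟨z, hz⟩ := hpow n
    rw [hv, hz, add_eq_left, ← pow_add, show n + k = r - 1 by omega, mul_add, ← mul_assoc,
      ← pow_succ, Nat.sub_add_cancel (by omega : 1 ≤ r), natCast_pow_eq_zero, zero_mul, add_zero]
    exact fun h => hpa (natCast_dvd_of_pow_sub_one_mul_eq_zero hp.ne_zero h)
  · obtain ⟨z, hz⟩ := hpow (n + 1)
    rw [hv, hz, ← pow_add, show n + 1 + k = r by omega, natCast_pow_eq_zero, zero_mul, add_zero]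

end MonoidAlgebra

theorem orderOf_unit_ZModPowGroupRing_general (p r : ℕ) [Fact p.Prime] (hp : Odd p) (hr : 1 ≤ r)
    (G : Type*) [Group G]
    (u : MonoidAlgebra (ZMod (p ^ r)) G) (l k : ℕ) (hk : 1 ≤ k)
    (hl : orderOf (modpReduction p r (Nat.one_le_iff_ne_zero.mp hr) G u) = l)
    (hmem : u ^ l - 1 ∈ Ideal.span {(p : MonoidAlgebra (ZMod (p ^ r)) G) ^ k})
    (hnmem : u ^ l - 1 ∉ Ideal.span {(p : MonoidAlgebra (ZMod (p ^ r)) G) ^ (k + 1)}) :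
    IsUnit u ∧ orderOf u = l * p ^ (r - k) := by
  have hprime : p.Prime := Fact.out
  have hl0 : l ≠ 0 := by
    rintro rfl
    simp at hnmem
  have hpk : k + 2 ≤ p * k := by
    have : 3 ≤ p := by
      obtain ⟨t, rfl⟩ := hp
      have := hprime.two_le
      omega
    nlinarith
  have hdvd : l ∣ orderOf u := hl ▸ orderOf_map_dvd (modpReduction p r _ G).toMonoidHom u
  have hord : orderOf u = l * p ^ (r - k) := by
    rw [← MonoidAlgebra.orderOf_eq_prime_pow_of_sub_one_mem hprime hpk hmem hnmem,
      orderOf_pow_of_dvd hl0 hdvd, Nat.mul_div_cancel' hdvd]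
  refine ⟨(orderOf_pos_iff.mp ?_).isUnit, hord⟩
  rw [hord]
  exact Nat.pos_of_ne_zero (mul_ne_zero hl0 (pow_ne_zero _ hprime.ne_zero))

/-- Let `p` be an odd prime, `r ≥ 1`, `G` a finite group,
and `u ∈ Z_{p^r}G` whose reduction mod `p` is a unit of order `l` in `F_p G`.
If `k ≥ 1` is such that `u^l - 1` lies in the ideal generated by `p^k` but not
in the one generated by `p^(k+1)`, then `u` is a unit of order `l * p^(r-k)`. -/
theorem orderOf_unit_ZModPowGroupRing (p r : ℕ) [Fact p.Prime] (hp : Odd p) (hr : 1 ≤ r)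
    (G : Type*) [Group G] [Finite G]
    (u : MonoidAlgebra (ZMod (p ^ r)) G) (l k : ℕ) (hk : 1 ≤ k)
    (hured : IsUnit (modpReduction p r (Nat.one_le_iff_ne_zero.mp hr) G u))
    (hl : orderOf (modpReduction p r (Nat.one_le_iff_ne_zero.mp hr) G u) = l)
    (hmem : u ^ l - 1 ∈ Ideal.span {(p : MonoidAlgebra (ZMod (p ^ r)) G) ^ k})
    (hnmem : u ^ l - 1 ∉ Ideal.span {(p : MonoidAlgebra (ZMod (p ^ r)) G) ^ (k + 1)}) :
    IsUnit u ∧ orderOf u = l * p ^ (r - k) :=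
  orderOf_unit_ZModPowGroupRing_general p r hp hr G u l k hk hl hmem hnmem
end

section
/- Let C_5 = ⟨g⟩ be a cyclic group of order 5. In the group algebra F_2C_5, the element 1 + g + g² is a unit of multiplicative order 15, and it generates the full unit group: every unit of F_2C_5 is a power of 1 + g + g² (so the unit group of F_2C_5 is cyclic of order 15). -/
/-!
Write `x` for the image of `g`, so `x ^ 5 = 1` and `x ≠ 1`. In characteristic `2` one computes
`(1 + x + x²)³ = x³` and `(1 + x + x²)⁵ = 1 + x² + x³ ≠ 1`, so `v = 1 + x + x²` is a unit of
order `15`.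

Conversely, a unit of `F₂[G]` has augmentation `1`, so `u ↦ u - 1` embeds the unit group into the
augmentation ideal, which has `2 ^ (|G| - 1)` elements. When `|G|` is odd this embedding misses
`N - 1`, where `N = ∑ h` is the norm element: `N * h = N` for all `h`, so `N` is not a unit. Hence
`F₂[C₅]` has at most `15` units and they are all powers of `v`.
-/

section CharTwo

variable {A : Type*} [Ring A] [CharP A 2] {x : A}

theorem one_add_self_add_sq_sq (x : A) : (1 + x + x ^ 2) ^ 2 = 1 + x ^ 2 + x ^ 4 := by
  calc (1 + x + x ^ 2) ^ 2 = 1 + x ^ 2 + x ^ 4 + 2 * (x + x ^ 2 + x ^ 3) := by noncomm_ring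
    _ = 1 + x ^ 2 + x ^ 4 := by rw [CharTwo.two_eq_zero (R := A), zero_mul, add_zero]

theorem one_add_self_add_sq_pow_three (hx : x ^ 5 = 1) : (1 + x + x ^ 2) ^ 3 = x ^ 3 := by
  calc (1 + x + x ^ 2) ^ 3
      = x ^ 3 + (x + 1) * (x ^ 5 - 1)
          + 2 * (1 + 2 * x + 3 * x ^ 2 + 3 * x ^ 3 + 3 * x ^ 4 + x ^ 5) := by
        noncomm_ring
    _ = x ^ 3 := by
        rw [hx, CharTwo.two_eq_zero (R := A), sub_self, mul_zero, zero_mul, add_zero, add_zero]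

theorem one_add_self_add_sq_pow_five (hx : x ^ 5 = 1) :
    (1 + x + x ^ 2) ^ 5 = 1 + x ^ 2 + x ^ 3 := by
  calc (1 + x + x ^ 2) ^ 5 = x ^ 3 * (1 + x ^ 2 + x ^ 4) := by
        rw [pow_add _ 3 2, one_add_self_add_sq_pow_three hx, one_add_self_add_sq_sq]
    _ = x ^ 5 + x ^ 2 * x ^ 5 + x ^ 3 := by noncomm_ring
    _ = 1 + x ^ 2 + x ^ 3 := by rw [hx]; noncomm_ring

theorem orderOf_one_add_self_add_sq (hx : orderOf x = 5) : orderOf (1 + x + x ^ 2) = 15 := by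
  have hx5 : x ^ 5 = 1 := hx ▸ pow_orderOf_eq_one x
  refine orderOf_eq_of_pow_and_pow_div_prime (by norm_num) ?_ fun p hp hpd => ?_
  · rw [pow_mul _ 3 5, one_add_self_add_sq_pow_three hx5, ← pow_mul, mul_comm, pow_mul, hx5,
      one_pow]
  obtain rfl | rfl : p = 3 ∨ p = 5 := by
    have := Nat.le_of_dvd (by norm_num) hpd
    interval_cases p <;> first | omega | norm_num at hp
  · rw [show 15 / 3 = 5 from rfl, one_add_self_add_sq_pow_five hx5]
    intro h
    have h32 : x ^ 3 = x ^ 2 := by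
      rwa [add_assoc, add_eq_left, CharTwo.add_eq_zero, eq_comm] at h
    have hx4 : x ^ 4 = 1 := by
      rw [show x ^ 4 = x ^ 2 * x ^ 3 by rw [h32, ← pow_add], ← pow_add, hx5]
    exact absurd (orderOf_dvd_of_pow_eq_one hx4) (by rw [hx]; norm_num)
  · rw [show 15 / 5 = 3 from rfl, one_add_self_add_sq_pow_three hx5]
    exact pow_ne_one_of_lt_orderOf (by norm_num) (by omega)

end CharTwo

namespace MonoidAlgebra

instance finite (k G : Type*) [Semiring k] [Finite k] [Finite G] : Finite (MonoidAlgebra k G) :=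
  .of_equiv _ (Finsupp.equivFunOnFinite.symm.trans coeffEquiv.symm)

theorem natCard_eq (k G : Type*) [Semiring k] [Finite G] :
    Nat.card (MonoidAlgebra k G) = Nat.card k ^ Nat.card G := by
  rw [Nat.card_congr (coeffEquiv.trans Finsupp.equivFunOnFinite), Nat.card_fun]

noncomputable def augmentation (k G : Type*) [CommSemiring k] [Monoid G] :
    MonoidAlgebra k G →ₐ[k] k :=
  lift k k G 1

section Augmentation

variable {k G : Type*} [CommSemiring k] [Monoid G]

@[simp]
theorem augmentation_of (g : G) : augmentation k G (of k G g) = 1 := by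
  simp [augmentation]

theorem augmentation_surjective : Function.Surjective (augmentation k G) :=
  fun r => ⟨algebraMap k _ r, AlgHom.commutes _ r⟩

end Augmentation

section NormElement

variable {k G : Type*} [Semiring k] [Group G] [Fintype G]

theorem sum_of_mul_of (g : G) : (∑ h, of k G h) * of k G g = ∑ h, of k G h := by
  rw [Finset.sum_mul]
  exact Fintype.sum_equiv (Equiv.mulRight g) _ _ fun h => (map_mul (of k G) h g).symm

theorem not_isUnit_sum_of [Nontrivial k] [Nontrivial G] : ¬IsUnit (∑ h, of k G h) := by
  intro hu
  obtain ⟨g, hg⟩ := exists_ne (1 : G)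
  apply hg
  apply of_injective (R := k)
  rw [map_one]
  exact hu.mul_left_cancel (by rw [mul_one, sum_of_mul_of])

end NormElement

theorem augmentation_eq_one_of_isUnit {G : Type*} [Monoid G] {a : MonoidAlgebra (ZMod 2) G}
    (ha : IsUnit a) : augmentation (ZMod 2) G a = 1 := by
  have := (ha.map (augmentation (ZMod 2) G)).ne_zero
  generalize augmentation (ZMod 2) G a = r at this
  revert r
  decide

theorem natCard_ker_augmentation_zmod_two (G : Type*) [Group G] [Finite G] :
    Nat.card (augmentation (ZMod 2) G : MonoidAlgebra (ZMod 2) G →+ ZMod 2).ker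
      = 2 ^ (Nat.card G - 1) := by
  have hrange :
      Nat.card (augmentation (ZMod 2) G : MonoidAlgebra (ZMod 2) G →+ ZMod 2).range = 2 := by
    rw [AddMonoidHom.range_eq_top.mpr augmentation_surjective]
    simp
  have := AddSubgroup.card_mul_index
    (augmentation (ZMod 2) G : MonoidAlgebra (ZMod 2) G →+ ZMod 2).ker
  rw [AddSubgroup.index_ker, hrange, natCard_eq, Nat.card_zmod] at this
  obtain ⟨n, hn⟩ := Nat.exists_eq_add_one.mpr (Nat.card_pos (α := G))
  rw [hn, pow_succ] at this
  rw [hn, Nat.add_sub_cancel]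
  omega

theorem natCard_units_lt_zmod_two {G : Type*} [Group G] [Fintype G] [Nontrivial G]
    (hodd : Odd (Fintype.card G)) :
    Nat.card (MonoidAlgebra (ZMod 2) G)ˣ < 2 ^ (Fintype.card G - 1) := by
  set K := (augmentation (ZMod 2) G : MonoidAlgebra (ZMod 2) G →+ ZMod 2).ker
  let shift : (MonoidAlgebra (ZMod 2) G)ˣ → K := fun u =>
    ⟨u - 1, by simp [K, augmentation_eq_one_of_isUnit u.isUnit]⟩
  have shift_injective : Function.Injective shift := fun u v h =>
    Units.ext (sub_left_inj.mp (congrArg Subtype.val h))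
  have hN : ∑ h, of (ZMod 2) G h - 1 ∈ K := by
    simp only [K, AddMonoidHom.mem_ker, AddMonoidHom.coe_coe, map_sub, map_sum, augmentation_of,
      Finset.sum_const, Finset.card_univ, nsmul_eq_mul, mul_one, hodd.natCast_zmod_two, map_one,
      sub_self]
  have hN_notMem : ⟨_, hN⟩ ∉ Set.range shift := by
    rintro ⟨u, hu⟩
    exact not_isUnit_sum_of (sub_left_inj.mp (congrArg Subtype.val hu) ▸ u.isUnit)
  have := Fintype.ofFinite K
  have := Fintype.ofFinite (MonoidAlgebra (ZMod 2) G)ˣ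
  rw [← Nat.card_eq_fintype_card, ← natCard_ker_augmentation_zmod_two, Nat.card_eq_fintype_card,
    Nat.card_eq_fintype_card]
  exact Fintype.card_lt_of_injective_of_notMem shift shift_injective hN_notMem

end MonoidAlgebra

/-- in `F_2 C_5` (with `C_5 = ⟨g⟩` cyclic of order 5), the element
`1 + g + g²` is a unit of order `15` which generates the whole unit group. -/
theorem unitGroup_F2C5 (G : Type*) [Group G] [Fintype G]
    (g : G) (hg : orderOf g = 5) (hcard : Fintype.card G = 5) :
    ∃ v : (MonoidAlgebra (ZMod 2) G)ˣ,
      (v : MonoidAlgebra (ZMod 2) G)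
          = 1 + MonoidAlgebra.of (ZMod 2) G g + MonoidAlgebra.of (ZMod 2) G g ^ 2 ∧
      orderOf v = 15 ∧
      ∀ w : (MonoidAlgebra (ZMod 2) G)ˣ, ∃ n : ℕ, w = v ^ n := by
  have : CharP (MonoidAlgebra (ZMod 2) G) 2 := charP_of_injective_algebraMap' (ZMod 2) 2
  have : Nontrivial G := nontrivial_of_ne g 1 (by rintro rfl; simp at hg)
  set x := MonoidAlgebra.of (ZMod 2) G g
  have hx : orderOf x = 5 := by rwa [orderOf_injective _ MonoidAlgebra.of_injective]
  have hv := orderOf_one_add_self_add_sq hx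
  let v := (orderOf_pos_iff.mp (by rw [hv]; norm_num) : IsOfFinOrder (1 + x + x ^ 2)).unit
  have hv' : orderOf v = 15 := by rwa [← orderOf_units]
  have hle : Nat.card (MonoidAlgebra (ZMod 2) G)ˣ ≤ Nat.card (Subgroup.zpowers v) := by
    have := MonoidAlgebra.natCard_units_lt_zmod_two (G := G) (by rw [hcard]; decide)
    rw [hcard] at this
    rw [Nat.card_zpowers, hv']
    exact Nat.le_of_lt_succ this
  refine ⟨v, rfl, hv', fun w => ?_⟩
  obtain ⟨n, hn⟩ := mem_powers_iff_mem_zpowers.mpr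
    (Subgroup.eq_top_of_le_card _ hle ▸ Subgroup.mem_top w)
  exact ⟨n, hn.symm⟩
end

section
/- Let r ≥ 1 be an integer and let C_5 = ⟨g⟩ be a cyclic group of order 5. The element 1 + g + g² is a unit of the group algebra Z_{2^r}C_5, and its order in the unit group of Z_{2^r}C_5 is 15 · 2^{r−1}. -/
/-! Put `t = of g` and `u = 1 + t + t²`. Since `t⁵ = 1`, `u³ = t³ (1 + 2a)` with
`a = 3 + 3t + 2t² + 2t³ + 3t⁴`, and `t³`, of order 5, commutes with `1 + 2a`. Squaring
`1 + 2a` gives `1 + 4(a + a²)`, and each further squaring raises the power of 2 by one; as `a`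
and `a + a²` reduce to `1 + t + t⁴` and `t + t² + t³ + t⁴` modulo 2, neither is killed by
`2^(r-1)`, so `1 + 2a` has order exactly `2^(r-1)` and `u³` has order `5 · 2^(r-1)`.
Modulo 2 we have `ū³ = t̄³` but `ū ≠ t̄`, so `ū⁵ ≠ 1`; hence 3 divides the order of `u`. -/

open MonoidAlgebra

section TwoAdic

variable {S : Type*} [CommRing S]

theorem one_add_four_mul_pow_two_pow (y : S) (n : ℕ) :
    ∃ c, (1 + 4 * y) ^ 2 ^ n = 1 + 2 ^ (n + 2) * (y + 2 * c) := by
  induction n with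
  | zero => exact ⟨0, by ring⟩
  | succ n ih =>
    obtain ⟨c, hc⟩ := ih
    refine ⟨c + 2 ^ n * (y + 2 * c) ^ 2, ?_⟩
    rw [pow_succ, pow_mul, hc]
    ring

theorem orderOf_one_add_two_mul {k : ℕ} (hS : (2 : S) ^ (k + 1) = 0) {a : S}
    (ha : 2 ^ k * a ≠ 0) (ha' : 2 ^ k * (a + a ^ 2) ≠ 0) :
    orderOf (1 + 2 * a) = 2 ^ k := by
  have hsq : (1 + 2 * a) ^ 2 = 1 + 4 * (a + a ^ 2) := by ring
  match k with
  | 0 => simp [show (2 : S) = 0 by simpa using hS]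
  | 1 =>
    refine orderOf_eq_prime (p := 2) ?_ (by simpa using ha)
    rw [hsq, show (4 : S) = 2 ^ (1 + 1) by norm_num, hS, zero_mul, add_zero]
  | n + 2 =>
    refine orderOf_eq_prime_pow ?_ ?_
    · obtain ⟨c, hc⟩ := one_add_four_mul_pow_two_pow (a + a ^ 2) n
      have hc' : 2 ^ (n + 2) * (a + a ^ 2 + 2 * c) = 2 ^ (n + 2) * (a + a ^ 2) := by
        linear_combination c * hS
      rw [pow_succ', pow_mul, hsq, hc, hc']
      simpa using ha'
    · obtain ⟨c, hc⟩ := one_add_four_mul_pow_two_pow (a + a ^ 2) (n + 1)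
      rw [pow_succ', pow_mul, hsq, hc, hS, zero_mul, add_zero]

end TwoAdic

section CubeIdentity

variable {S : Type*} [CommRing S]

def cubeCofactor (t : S) : S :=
  3 + 3 * t + 2 * t ^ 2 + 2 * t ^ 3 + 3 * t ^ 4

theorem map_cubeCofactor {T : Type*} [CommRing T] (f : S →+* T) (t : S) :
    f (cubeCofactor t) = cubeCofactor (f t) := by
  simp only [cubeCofactor, map_add, map_mul, map_pow, map_ofNat]

theorem one_add_add_sq_pow_three {t : S} (ht : t ^ 5 = 1) :
    (1 + t + t ^ 2) ^ 3 = t ^ 3 * (1 + 2 * cubeCofactor t) := by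
  rw [cubeCofactor]
  linear_combination (-(1 + 3 * t + 6 * t ^ 2)) * ht

theorem three_dvd_orderOf_one_add_add_sq (h2 : (2 : S) = 0) {s : S} (hs : s ^ 5 = 1)
    (hs2 : 1 + s ^ 2 ≠ 0) : 3 ∣ orderOf (1 + s + s ^ 2) := by
  set u := 1 + s + s ^ 2
  have hcube : u ^ 3 = s ^ 3 := by
    rw [one_add_add_sq_pow_three hs, h2, zero_mul, add_zero, mul_one]
  have h15 : u ^ 15 = 1 := by
    rw [pow_mul u 3 5, hcube, ← pow_mul, pow_mul' s 3 5, hs, one_pow]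
  have h5 : u ^ 5 ≠ 1 := by
    intro h5
    have hus : u = s := by
      calc u = u ^ 5 * u := by rw [h5, one_mul]
        _ = (u ^ 3) ^ 2 := by ring
        _ = s ^ 5 * s := by rw [hcube]; ring
        _ = s := by rw [hs, one_mul]
    exact hs2 (by linear_combination hus)
  by_contra h3
  have hcop : (orderOf u).Coprime 3 :=
    ((Nat.Prime.coprime_iff_not_dvd Nat.prime_three).2 h3).symm
  exact h5 (orderOf_dvd_iff_pow_eq_one.mp
    (hcop.dvd_of_dvd_mul_right (orderOf_dvd_of_pow_eq_one h15)))

end CubeIdentity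

theorem ZMod.castHom_eq_zero_of_pow_mul_eq_zero {p k : ℕ} [NeZero p] {c : ZMod (p ^ (k + 1))}
    (hc : (p : ZMod (p ^ (k + 1))) ^ k * c = 0) :
    ZMod.castHom (dvd_pow_self p k.succ_ne_zero) (ZMod p) c = 0 := by
  obtain ⟨m, rfl⟩ := ZMod.natCast_zmod_surjective c
  rw [← Nat.cast_pow, ← Nat.cast_mul, ZMod.natCast_eq_zero_iff, pow_succ,
    Nat.mul_dvd_mul_iff_left (pow_pos (Nat.pos_of_neZero p) k)] at hc
  rwa [map_natCast, ZMod.natCast_eq_zero_iff]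

namespace MonoidAlgebra

theorem natCast_self_eq_zero (G : Type*) [Monoid G] (n : ℕ) :
    (n : MonoidAlgebra (ZMod n) G) = 0 := by
  rw [natCast_def, ZMod.natCast_self, single_zero]

theorem sum_of_pow_ne_zero {k G : Type*} [Semiring k] [Nontrivial k] [LeftCancelMonoid G]
    {g : G} {I : Finset ℕ} (hI : I.Nonempty) (hlt : ∀ i ∈ I, i < orderOf g) :
    ∑ i ∈ I, of k G g ^ i ≠ 0 := by
  obtain ⟨i, hi⟩ := hI
  intro h
  have hcoeff := congrArg (fun x => x.coeff (g ^ i)) h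
  simp only [coeff_sum, of_apply, single_pow, one_pow, coeff_single, coeff_zero] at hcoeff
  rw [Finset.sum_apply', Finset.sum_eq_single i] at hcoeff
  · simp at hcoeff
  · intro j hj hji
    exact Finsupp.single_eq_of_ne
      (fun he => hji (pow_injOn_Iio_orderOf (hlt j hj) (hlt i hi) he.symm))
  · exact fun h => (h hi).elim

variable (G : Type*) [Monoid G] (p k : ℕ)

noncomputable def reduceMod : MonoidAlgebra (ZMod (p ^ (k + 1))) G →+* MonoidAlgebra (ZMod p) G :=
  mapRingHom G (ZMod.castHom (dvd_pow_self p k.succ_ne_zero) (ZMod p))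

variable {G p k}

theorem reduceMod_of (g : G) : reduceMod G p k (of _ G g) = of (ZMod p) G g := by
  rw [reduceMod, of_apply, of_apply, mapRingHom_single, map_one]

theorem reduceMod_eq_zero_of_pow_mul_eq_zero [NeZero p] {x : MonoidAlgebra (ZMod (p ^ (k + 1))) G}
    (hx : (p : MonoidAlgebra (ZMod (p ^ (k + 1))) G) ^ k * x = 0) : reduceMod G p k x = 0 := by
  ext m
  rw [reduceMod, coeff_mapRingHom, coeff_zero, Finsupp.coe_zero, Pi.zero_apply]
  apply ZMod.castHom_eq_zero_of_pow_mul_eq_zero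
  simpa only [natCast_def, single_pow, one_pow, coeff_single_one_mul, coeff_zero,
    Finsupp.zero_apply] using congrArg (fun y => y.coeff m) hx

end MonoidAlgebra

section CyclicOfOrderFive

variable {G : Type*} [CommGroup G] {g : G}

theorem orderOf_one_add_two_mul_cubeCofactor (hg : orderOf g = 5) (k : ℕ) :
    orderOf (1 + 2 * cubeCofactor (of (ZMod (2 ^ (k + 1))) G g)) = 2 ^ k := by
  set s := of (ZMod 2) G g
  have hs : s ^ 5 = 1 := by rw [← map_pow, ← hg, pow_orderOf_eq_one, map_one]
  have h2 : (2 : MonoidAlgebra (ZMod 2) G) = 0 := by exact_mod_cast natCast_self_eq_zero G 2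
  have hred : reduceMod G 2 k (cubeCofactor (of _ G g)) = 1 + s + s ^ 4 := by
    rw [map_cubeCofactor, reduceMod_of, cubeCofactor]
    linear_combination (1 + s + s ^ 2 + s ^ 3 + s ^ 4) * h2
  have hne : ∀ x, reduceMod G 2 k x ≠ 0 → 2 ^ k * x ≠ 0 := fun x hx h =>
    hx (reduceMod_eq_zero_of_pow_mul_eq_zero (by exact_mod_cast h))
  refine orderOf_one_add_two_mul (by exact_mod_cast natCast_self_eq_zero G (2 ^ (k + 1)))
    (hne _ ?_) (hne _ ?_)
  · rw [hred, show 1 + s + s ^ 4 = ∑ i ∈ {0, 1, 4}, s ^ i by simp [add_assoc]]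
    exact sum_of_pow_ne_zero (by simp) (by simp [hg])
  · rw [map_add, map_pow, hred,
      show 1 + s + s ^ 4 + (1 + s + s ^ 4) ^ 2 = s + s ^ 2 + s ^ 3 + s ^ 4 by
        linear_combination s ^ 3 * hs + (1 + s + s ^ 4 + s ^ 5) * h2,
      show s + s ^ 2 + s ^ 3 + s ^ 4 = ∑ i ∈ {1, 2, 3, 4}, s ^ i by simp [add_assoc]]
    exact sum_of_pow_ne_zero (by simp) (by simp [hg])

theorem orderOf_one_add_of_add_of_sq (hg : orderOf g = 5) (k : ℕ) :
    orderOf (1 + of (ZMod (2 ^ (k + 1))) G g + of (ZMod (2 ^ (k + 1))) G g ^ 2) = 15 * 2 ^ k := by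
  have : Fact (1 < 2 ^ (k + 1)) := ⟨Nat.one_lt_two_pow k.succ_ne_zero⟩
  set t := of (ZMod (2 ^ (k + 1))) G g
  have ht : orderOf t = 5 := by rw [orderOf_injective _ of_injective, hg]
  have ht3 : orderOf (t ^ 3) = 5 := by
    rw [Nat.Coprime.orderOf_pow (by rw [ht]; norm_num), ht]
  have hw := orderOf_one_add_two_mul_cubeCofactor hg k
  have hcube : orderOf ((1 + t + t ^ 2) ^ 3) = 5 * 2 ^ k := by
    have hcop : (orderOf (t ^ 3)).Coprime (orderOf (1 + 2 * cubeCofactor t)) := by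
      rw [ht3, hw]
      exact Nat.Coprime.pow_right k (by norm_num)
    rw [one_add_add_sq_pow_three (by rw [← ht, pow_orderOf_eq_one]),
      (Commute.all _ _).orderOf_mul_eq_mul_orderOf_of_coprime hcop, ht3, hw]
  set s := of (ZMod 2) G g
  have hred : reduceMod G 2 k (1 + t + t ^ 2) = 1 + s + s ^ 2 := by
    simp only [t, s, map_add, map_one, map_pow, reduceMod_of]
  have h3 : 3 ∣ orderOf (1 + t + t ^ 2) := by
    refine dvd_trans ?_ (orderOf_map_dvd (reduceMod G 2 k).toMonoidHom (1 + t + t ^ 2))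
    rw [RingHom.toMonoidHom_eq_coe, MonoidHom.coe_coe, hred]
    refine three_dvd_orderOf_one_add_add_sq (by exact_mod_cast natCast_self_eq_zero G 2)
      (by rw [← map_pow, ← hg, pow_orderOf_eq_one, map_one]) ?_
    rw [show 1 + s ^ 2 = ∑ i ∈ {0, 2}, s ^ i by simp]
    exact sum_of_pow_ne_zero (by simp) (by simp [hg])
  rw [orderOf_pow_of_dvd three_ne_zero h3] at hcube
  omega

end CyclicOfOrderFive

/-- in `Z_{2^r} C_5`, `r ≥ 1`, the element `1 + g + g²` is a unit
of order `15 · 2^(r-1)` in the unit group. -/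
theorem orderOf_one_add_g_add_gsq (r : ℕ) (hr : 1 ≤ r) (G : Type*) [Group G] [Fintype G]
    (g : G) (hg : orderOf g = 5) (hcard : Fintype.card G = 5) :
    ∃ v : (MonoidAlgebra (ZMod (2 ^ r)) G)ˣ,
      (v : MonoidAlgebra (ZMod (2 ^ r)) G)
          = 1 + MonoidAlgebra.of (ZMod (2 ^ r)) G g + MonoidAlgebra.of (ZMod (2 ^ r)) G g ^ 2 ∧
      orderOf v = 15 * 2 ^ (r - 1) := by
  obtain ⟨k, rfl⟩ : ∃ k, r = k + 1 := ⟨r - 1, by omega⟩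
  have : Fact (Nat.Prime 5) := ⟨by norm_num⟩
  have : IsCyclic G := isCyclic_of_prime_card (p := 5) (by rw [Nat.card_eq_fintype_card, hcard])
  let : CommGroup G := IsCyclic.commGroup
  have horder := orderOf_one_add_of_add_of_sq hg k
  have hunit := IsUnit.of_pow_eq_one (pow_orderOf_eq_one _) (by rw [horder]; positivity)
  refine ⟨hunit.unit, rfl, ?_⟩
  rw [← orderOf_units, IsUnit.unit_spec, horder, Nat.add_sub_cancel]
end

section
/- Let r ≥ 1 be an integer and let C_5 = ⟨g⟩ be a cyclic group of order 5. The element 1 + 2g is a unit of the group algebra Z_{2^r}C_5, and its order in the unit group of Z_{2^r}C_5 is 2^{r−1}. -/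
/-!
Squaring sends `1 + 2 ^ (k + 1) * c` to `1 + 2 ^ (k + 2) * (c + 2 ^ k * c ^ 2)`, and
`(1 + 2 * t) ^ 2 = 1 + 4 * (t + t ^ 2)`, so `(1 + 2 * t) ^ 2 ^ (m + 1)` is `1 + 2 ^ (m + 2) * (t + t ^ 2)`
modulo `2 ^ (m + 3)`. When `2 ^ r = 0` this is `1` for `m = r - 2`, and for `m = r - 3` it is not,
provided `2 ^ (r - 1) * (t + t ^ 2) ≠ 0`; in `ℤ/2^r[G]` with `t = g ≠ 1` this holds because
`g + g ^ 2` has coefficient `1` at `g`.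
-/

section Ring

variable {R : Type*} [Ring R]

theorem one_add_two_pow_mul_sq (k : ℕ) (c : R) :
    (1 + 2 ^ (k + 1) * c) ^ 2 = 1 + 2 ^ (k + 2) * (c + 2 ^ k * c ^ 2) := by
  rw [(Commute.one_left _).add_sq, ((Commute.ofNat_left 2 c).pow_left _).mul_pow, one_pow,
    mul_one, ← mul_assoc, ← pow_succ', ← pow_mul, mul_add, ← mul_assoc, ← pow_add, add_assoc,
    show (k + 1) * 2 = k + 2 + k by ring]

theorem exists_one_add_four_mul_pow_two_pow (u : R) (m : ℕ) :
    ∃ b, (1 + 4 * u) ^ 2 ^ m = 1 + 2 ^ (m + 2) * (u + 2 * b) := by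
  induction m with
  | zero => exact ⟨0, by norm_num⟩
  | succ m ih =>
    obtain ⟨b, hb⟩ := ih
    refine ⟨b + 2 ^ m * (u + 2 * b) ^ 2, ?_⟩
    rw [pow_succ, pow_mul, hb, one_add_two_pow_mul_sq, mul_add 2, ← mul_assoc 2, ← pow_succ',
      ← add_assoc u]

theorem orderOf_one_add_two_mul_s7 {t : R} {n : ℕ} (h2 : (2 : R) ^ (n + 2) = 0)
    (ht : 2 ^ (n + 1) * (t + t ^ 2) ≠ 0) : orderOf (1 + 2 * t) = 2 ^ (n + 1) := by
  have hsq : (1 + 2 * t) ^ 2 = 1 + 4 * (t + t ^ 2) := by noncomm_ring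
  have : Fact (Nat.Prime 2) := ⟨Nat.prime_two⟩
  refine orderOf_eq_prime_pow ?_ ?_
  · rcases n with _ | m
    · intro h
      have h2t : 2 * t = 0 := by simpa using h
      exact ht (by rw [pow_one, mul_add, sq, ← mul_assoc, h2t, zero_mul, add_zero])
    · obtain ⟨b, hb⟩ := exists_one_add_four_mul_pow_two_pow (t + t ^ 2) m
      rwa [pow_succ', pow_mul, hsq, hb, mul_add, ← mul_assoc, ← pow_succ, h2, zero_mul,
        add_zero, add_eq_left]
  · obtain ⟨b, hb⟩ := exists_one_add_four_mul_pow_two_pow (t + t ^ 2) n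
    rw [pow_succ', pow_mul, hsq, hb, h2, zero_mul, add_zero]

end Ring

namespace MonoidAlgebra

variable {G : Type*} [Monoid G]

theorem two_pow_eq_zero (r : ℕ) : (2 : MonoidAlgebra (ZMod (2 ^ r)) G) ^ r = 0 := by
  have h : ((2 ^ r : ℕ) : MonoidAlgebra (ZMod (2 ^ r)) G) = 0 := by
    rw [← map_natCast (algebraMap (ZMod (2 ^ r)) _), ZMod.natCast_self, map_zero]
  exact_mod_cast h

theorem two_pow_mul_ne_zero_of_coeff_eq_one {n : ℕ} {y : MonoidAlgebra (ZMod (2 ^ (n + 1))) G}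
    {g : G} (hy : y.coeff g = 1) : 2 ^ n * y ≠ 0 := by
  intro h
  have h2 : (2 : MonoidAlgebra (ZMod (2 ^ (n + 1))) G) ^ n = single 1 ((2 ^ n : ℕ) : ZMod _) := by
    rw [← natCast_def, Nat.cast_pow, Nat.cast_ofNat]
  have hcoeff := congr(($h).coeff g)
  rw [h2, coeff_single_one_mul, hy, mul_one, coeff_zero, Finsupp.zero_apply,
    ZMod.natCast_eq_zero_iff, Nat.pow_dvd_pow_iff_le_right (by norm_num)] at hcoeff
  omega

theorem coeff_of_add_of_sq_self {k G : Type*} [Semiring k] [LeftCancelMonoid G] {g : G}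
    (hg : g ≠ 1) : (of k G g + of k G g ^ 2).coeff g = 1 := by
  simp [sq, hg]

end MonoidAlgebra

open MonoidAlgebra in
theorem orderOf_one_add_two_g_general (r : ℕ) (hr : 1 ≤ r) (G : Type*) [Group G]
    (g : G) (hg : orderOf g = 5) :
    ∃ v : (MonoidAlgebra (ZMod (2 ^ r)) G)ˣ,
      (v : MonoidAlgebra (ZMod (2 ^ r)) G)
          = 1 + 2 * MonoidAlgebra.of (ZMod (2 ^ r)) G g ∧
      orderOf v = 2 ^ (r - 1) := by
  have hg1 : g ≠ 1 := by
    rintro rfl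
    simp at hg
  obtain ⟨n, rfl⟩ : ∃ n, r = n + 1 := ⟨r - 1, by omega⟩
  set x := 1 + 2 * of (ZMod (2 ^ (n + 1))) G g
  have hord : orderOf x = 2 ^ n := by
    rcases n with _ | n
    · have h2 : (2 : MonoidAlgebra (ZMod (2 ^ (0 + 1))) G) = 0 := by
        simpa using two_pow_eq_zero (G := G) (0 + 1)
      simp [x, h2]
    · exact orderOf_one_add_two_mul_s7 (two_pow_eq_zero _)
        (two_pow_mul_ne_zero_of_coeff_eq_one (coeff_of_add_of_sq_self hg1))
  have hx : IsUnit x := IsUnit.of_pow_eq_one (pow_orderOf_eq_one x) (by simp [hord])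
  refine ⟨hx.unit, rfl, ?_⟩
  rw [← orderOf_units, hx.unit_spec, hord, Nat.add_sub_cancel]

/-- in `Z_{2^r} C_5`, `r ≥ 1`, the element `1 + 2g` is a unit
of order `2^(r-1)` in the unit group. -/
theorem orderOf_one_add_two_g (r : ℕ) (hr : 1 ≤ r) (G : Type*) [Group G] [Fintype G]
    (g : G) (hg : orderOf g = 5) (hcard : Fintype.card G = 5) :
    ∃ v : (MonoidAlgebra (ZMod (2 ^ r)) G)ˣ,
      (v : MonoidAlgebra (ZMod (2 ^ r)) G)
          = 1 + 2 * MonoidAlgebra.of (ZMod (2 ^ r)) G g ∧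
      orderOf v = 2 ^ (r - 1) :=
  orderOf_one_add_two_g_general r hr G g hg
end

section
/- Let r ≥ 1 be an integer and let C_5 = ⟨g⟩ be a cyclic group of order 5. The element 1 + 2g² is a unit of the group algebra Z_{2^r}C_5, and its order in the unit group of Z_{2^r}C_5 is 2^{r−1}. -/
/-!
Squaring `1 + 2^(k+1) c` gives `1 + 2^(k+2) c'`, so `(1 + 2x)^(2^(r-1)) = 1` once `2^r = 0`.
More precisely `(1 + 2x)^(2^(k+1)) ≡ 1 + 2^(k+2) (x + x²) mod 2^(k+3)`. For `x = h ≠ 1` in a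
left-cancellative monoid, `h` differs from `1` and from `h²`, so the coefficient of `h` in
`(1 + 2h)^(2^(r-2))` is `2^(r-1) ≠ 0` over `ℤ/2^r`, and the order is exactly `2^(r-1)`.
-/

section Ring
variable {R : Type*} [Ring R]

/-- Lets `noncomm_ring` move the central factors `2 ^ k` (symbolic exponent) to the front. -/
theorem mul_left_comm_two_pow (y : R) (k : ℕ) (x : R) : y * (2 ^ k * x) = 2 ^ k * (y * x) := by
  rw [← mul_assoc, ← mul_assoc, ((Commute.ofNat_left 2 y).pow_left k).eq]

theorem exists_one_add_two_mul_pow_two_pow_eq (a : R) (k : ℕ) :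
    ∃ c : R, (1 + 2 * a) ^ 2 ^ k = 1 + 2 ^ (k + 1) * c := by
  induction k with
  | zero => exact ⟨a, by simp⟩
  | succ k ih =>
    obtain ⟨c, hc⟩ := ih
    refine ⟨c + 2 ^ k * c ^ 2, ?_⟩
    rw [pow_succ, pow_mul, hc]
    noncomm_ring [mul_left_comm_two_pow]

theorem exists_one_add_two_mul_pow_two_pow_succ_eq (a : R) (k : ℕ) :
    ∃ c : R, (1 + 2 * a) ^ 2 ^ (k + 1) = 1 + 2 ^ (k + 2) * (a + a ^ 2) + 2 ^ (k + 3) * c := by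
  induction k with
  | zero => exact ⟨0, by rw [zero_add, pow_one]; noncomm_ring⟩
  | succ k ih =>
    obtain ⟨c, hc⟩ := ih
    refine ⟨c + 2 ^ k * (a + a ^ 2 + 2 * c) ^ 2, ?_⟩
    rw [pow_succ 2 (k + 1), pow_mul, hc]
    noncomm_ring [mul_left_comm_two_pow]

theorem one_add_two_mul_pow_two_pow_eq_one {n : ℕ} (h2 : (2 : R) ^ (n + 1) = 0) (a : R) :
    (1 + 2 * a) ^ 2 ^ n = 1 := by
  obtain ⟨c, hc⟩ := exists_one_add_two_mul_pow_two_pow_eq a n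
  rw [hc, h2, zero_mul, add_zero]

end Ring

theorem ZMod.pow_ne_zero_of_lt {b k n : ℕ} (hb : 1 < b) (hk : k < n) :
    (b : ZMod (b ^ n)) ^ k ≠ 0 := by
  rw [← Nat.cast_pow, Ne, ZMod.natCast_eq_zero_iff, Nat.pow_dvd_pow_iff_le_right hb]
  omega

theorem two_pow_eq_zero_of_algebra_zmod {A : Type*} [Ring A] (n : ℕ) [Algebra (ZMod (2 ^ n)) A] :
    (2 : A) ^ n = 0 := by
  have h : (2 : ZMod (2 ^ n)) ^ n = 0 := by exact_mod_cast ZMod.natCast_self (2 ^ n)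
  rw [← map_ofNat (algebraMap (ZMod (2 ^ n)) A), ← map_pow, h, map_zero]

namespace MonoidAlgebra
variable {G : Type*} [Monoid G] [IsLeftCancelMul G] {h : G}

theorem coeff_one_add_two_mul_of_pow_two_pow (hh : h ≠ 1) (m : ℕ) :
    ((1 + 2 * of (ZMod (2 ^ (m + 2))) G h) ^ 2 ^ m).coeff h = 2 ^ (m + 1) := by
  cases m with
  | zero => simp [ofNat_def, one_def, hh.symm]
  | succ k =>
    obtain ⟨c, hc⟩ := exists_one_add_two_mul_pow_two_pow_succ_eq (of (ZMod (2 ^ (k + 3))) G h) k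
    have h2 : (2 : MonoidAlgebra (ZMod (2 ^ (k + 1 + 2))) G) ^ (k + 3) = 0 :=
      two_pow_eq_zero_of_algebra_zmod _
    rw [hc, h2, zero_mul, add_zero]
    simp [ofNat_def, single_pow, coeff_single_one_mul, one_def, hh, sq]

theorem one_add_two_mul_of_pow_two_pow_ne_one (hh : h ≠ 1) (m : ℕ) :
    (1 + 2 * of (ZMod (2 ^ (m + 2))) G h) ^ 2 ^ m ≠ 1 := by
  intro h1
  have hcoeff := coeff_one_add_two_mul_of_pow_two_pow hh m
  rw [h1, one_def, coeff_single, Finsupp.single_eq_of_ne hh] at hcoeff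
  exact ZMod.pow_ne_zero_of_lt (b := 2) one_lt_two (Nat.lt_succ_self _)
    (by exact_mod_cast hcoeff.symm)

theorem orderOf_one_add_two_mul_of (hh : h ≠ 1) (n : ℕ) :
    orderOf (1 + 2 * of (ZMod (2 ^ (n + 1))) G h) = 2 ^ n := by
  have hfin := one_add_two_mul_pow_two_pow_eq_one (two_pow_eq_zero_of_algebra_zmod (n + 1))
    (of (ZMod (2 ^ (n + 1))) G h)
  cases n with
  | zero => exact orderOf_eq_one_iff.mpr (by simpa using hfin)
  | succ m => exact orderOf_eq_prime_pow (one_add_two_mul_of_pow_two_pow_ne_one hh m) hfin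

end MonoidAlgebra

theorem orderOf_one_add_two_gsq_general (r : ℕ) (hr : 1 ≤ r) (G : Type*) [Group G]
    (g : G) (hg : orderOf g = 5) :
    ∃ v : (MonoidAlgebra (ZMod (2 ^ r)) G)ˣ,
      (v : MonoidAlgebra (ZMod (2 ^ r)) G)
          = 1 + 2 * MonoidAlgebra.of (ZMod (2 ^ r)) G g ^ 2 ∧
      orderOf v = 2 ^ (r - 1) := by
  obtain ⟨n, rfl⟩ : ∃ n, r = n + 1 := ⟨r - 1, by omega⟩
  have hg2 : g ^ 2 ≠ 1 := pow_ne_one_of_lt_orderOf two_ne_zero (by omega)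
  have hfin := one_add_two_mul_pow_two_pow_eq_one (two_pow_eq_zero_of_algebra_zmod (n + 1))
    (MonoidAlgebra.of (ZMod (2 ^ (n + 1))) G g ^ 2)
  have hu := IsUnit.of_pow_eq_one hfin (pow_ne_zero n two_ne_zero)
  refine ⟨hu.unit, hu.unit_spec, ?_⟩
  rw [← orderOf_units, hu.unit_spec, ← map_pow, MonoidAlgebra.orderOf_one_add_two_mul_of hg2,
    Nat.add_sub_cancel]

/-- in `Z_{2^r} C_5`, `r ≥ 1`, the element `1 + 2g²` is a unit
of order `2^(r-1)` in the unit group. -/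
theorem orderOf_one_add_two_gsq (r : ℕ) (hr : 1 ≤ r) (G : Type*) [Group G] [Fintype G]
    (g : G) (hg : orderOf g = 5) (hcard : Fintype.card G = 5) :
    ∃ v : (MonoidAlgebra (ZMod (2 ^ r)) G)ˣ,
      (v : MonoidAlgebra (ZMod (2 ^ r)) G)
          = 1 + 2 * MonoidAlgebra.of (ZMod (2 ^ r)) G g ^ 2 ∧
      orderOf v = 2 ^ (r - 1) :=
  orderOf_one_add_two_gsq_general r hr G g hg
end

section
/- Let r ≥ 2 be an integer and let C_5 = ⟨g⟩ be a cyclic group of order 5. In Z_{2^r}C_5 let a := 3 · 5⁻¹ (5 is a unit of Z_{2^r}). Then the element x := (1 − a)(1 + g + g² + g³ + g⁴) − 1 satisfies x² = 1 and x ≠ 1; in particular x is a unit of order 2 in the unit group of Z_{2^r}C_5. -/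
/-!
Write `σ = 1 + g + ⋯ + g⁴`. From `σ (g - 1) = g⁵ - 1 = 0` we get `σ g = σ`, hence `σ² = 5 σ`;
as `t := 1 - a = 2 · 5⁻¹`, the element `t σ` is twice the idempotent `σ / 5`, so `x = t σ - 1`
squares to `1`. The same identity gives `x (g - 1) = -(g - 1)`, so `x = 1` would force
`2 g = 2` in `Z_{2^r} C_5`, which fails because `g ≠ 1` and `2 ≠ 0` in `Z_{2^r}` for `r ≥ 2`.
-/

open Finset

section GeomSum

variable {A : Type*} [Ring A] {y : A} {n : ℕ}

theorem geom_sum_mul_eq_zero_of_pow_eq_one (hy : y ^ n = 1) :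
    (∑ i ∈ range n, y ^ i) * (y - 1) = 0 := by
  rw [geom_sum_mul, hy, sub_self]

theorem geom_sum_mul_pow_of_pow_eq_one (hy : y ^ n = 1) (k : ℕ) :
    (∑ i ∈ range n, y ^ i) * y ^ k = ∑ i ∈ range n, y ^ i := by
  induction k with
  | zero => rw [pow_zero, mul_one]
  | succ k ih =>
    have hσy := geom_sum_mul_eq_zero_of_pow_eq_one hy
    rw [mul_sub, mul_one, sub_eq_zero] at hσy
    rw [pow_succ, ← mul_assoc, ih, hσy]

theorem geom_sum_mul_self_of_pow_eq_one (hy : y ^ n = 1) :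
    (∑ i ∈ range n, y ^ i) * (∑ i ∈ range n, y ^ i) = n • ∑ i ∈ range n, y ^ i := by
  simp only [mul_sum (range n), geom_sum_mul_pow_of_pow_eq_one hy, sum_const, card_range]

end GeomSum

section Involution

variable {R A : Type*} [CommRing R] [Ring A] [Algebra R A] {y : A} {n : ℕ}

theorem sq_smul_geom_sum_sub_one (hy : y ^ n = 1) {t : R} (ht : n * t = 2) :
    (t • ∑ i ∈ range n, y ^ i - 1) ^ 2 = 1 := by
  set u := t • ∑ i ∈ range n, y ^ i
  have hu : u * u = 2 * u := by
    rw [smul_mul_smul, geom_sum_mul_self_of_pow_eq_one hy, ← Nat.cast_smul_eq_nsmul R, smul_smul,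
      mul_assoc, mul_comm t (n : R), ht, mul_comm, ← smul_smul, ofNat_smul_eq_nsmul, two_nsmul,
      two_mul]
  calc (u - 1) ^ 2 = u * u - 2 * u + 1 := by noncomm_ring
    _ = 1 := by rw [hu, sub_self, zero_add]

theorem smul_geom_sum_sub_one_mul_sub_one (hy : y ^ n = 1) (t : R) :
    (t • ∑ i ∈ range n, y ^ i - 1) * (y - 1) = -(y - 1) := by
  rw [sub_mul, smul_mul_assoc, geom_sum_mul_eq_zero_of_pow_eq_one hy, smul_zero, one_mul, zero_sub]

end Involution

theorem MonoidAlgebra.of_sub_one_ne_neg {R M : Type*} [Ring R] [MulOneClass M] {m : M} (hm : m ≠ 1)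
    (h2 : (2 : R) ≠ 0) : of R M m - 1 ≠ -(of R M m - 1) := by
  intro h
  rw [eq_neg_iff_add_eq_zero, ← two_smul R, smul_sub, sub_eq_zero, of_apply, one_def, smul_single',
    smul_single', mul_one, single_left_inj h2] at h
  exact hm h

theorem ZMod.natCast_ne_zero_of_two_le_exponent {p r : ℕ} (hp : 1 < p) (hr : 2 ≤ r) :
    (p : ZMod (p ^ r)) ≠ 0 := by
  rw [Ne, ZMod.natCast_eq_zero_iff]
  nth_rw 2 [← pow_one p]
  rw [Nat.pow_dvd_pow_iff_le_right hp]
  omega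

theorem order_two_unit_Z2rC5_general (r : ℕ) (hr : 2 ≤ r) (G : Type*) [Group G]
    (g : G) (hg : orderOf g = 5) :
    IsUnit (5 : ZMod (2 ^ r)) ∧
    ∀ x : MonoidAlgebra (ZMod (2 ^ r)) G,
      x = (1 - algebraMap (ZMod (2 ^ r)) (MonoidAlgebra (ZMod (2 ^ r)) G)
              (3 * (5 : ZMod (2 ^ r))⁻¹))
            * (1 + MonoidAlgebra.of (ZMod (2 ^ r)) G g
                + MonoidAlgebra.of (ZMod (2 ^ r)) G g ^ 2
                + MonoidAlgebra.of (ZMod (2 ^ r)) G g ^ 3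
                + MonoidAlgebra.of (ZMod (2 ^ r)) G g ^ 4) - 1 →
      x ^ 2 = 1 ∧ x ≠ 1 ∧ ∃ v : (MonoidAlgebra (ZMod (2 ^ r)) G)ˣ,
        (v : MonoidAlgebra (ZMod (2 ^ r)) G) = x ∧ orderOf v = 2 := by
  have h5 : IsUnit (5 : ZMod (2 ^ r)) := by
    exact_mod_cast (ZMod.isUnit_iff_coprime 5 (2 ^ r)).2 (Nat.Coprime.pow_right r (by norm_num))
  refine ⟨h5, fun x hx => ?_⟩
  set y := MonoidAlgebra.of (ZMod (2 ^ r)) G g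
  set t : ZMod (2 ^ r) := 1 - 3 * 5⁻¹
  have hy : y ^ 5 = 1 := by rw [← map_pow, ← hg, pow_orderOf_eq_one, map_one]
  have ht : ((5 : ℕ) : ZMod (2 ^ r)) * t = 2 := by
    push_cast
    linear_combination (-3 : ZMod (2 ^ r)) * ZMod.mul_inv_of_unit _ h5
  have hx' : x = t • ∑ i ∈ range 5, y ^ i - 1 := by
    simp only [hx, sum_range_succ, sum_range_zero, Algebra.smul_def, map_sub, map_one, pow_zero,
      pow_one, zero_add, t]
  have hx2 : x ^ 2 = 1 := hx' ▸ sq_smul_geom_sum_sub_one hy ht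
  have hx1 : x ≠ 1 := by
    rintro rfl
    have h2 : (2 : ZMod (2 ^ r)) ≠ 0 := by
      exact_mod_cast ZMod.natCast_ne_zero_of_two_le_exponent one_lt_two hr
    refine MonoidAlgebra.of_sub_one_ne_neg (m := g) (fun hg1 => ?_) h2 ?_
    · rw [hg1, orderOf_one] at hg
      omega
    · simpa only [← hx', one_mul] using smul_geom_sum_sub_one_mul_sub_one hy t
  have hxu : IsUnit x := IsUnit.of_pow_eq_one hx2 two_ne_zero
  have : Fact (Nat.Prime 2) := ⟨Nat.prime_two⟩
  refine ⟨hx2, hx1, hxu.unit, rfl, ?_⟩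
  rw [← orderOf_units, hxu.unit_spec, orderOf_eq_prime hx2 hx1]

/-- in `Z_{2^r} C_5`, `r ≥ 2`, with `a := 3 · 5⁻¹`, the element
`x := (1 - a)(1 + g + g² + g³ + g⁴) - 1` satisfies `x² = 1`, `x ≠ 1`, and so
is a unit of order `2` in the unit group. -/
theorem order_two_unit_Z2rC5 (r : ℕ) (hr : 2 ≤ r) (G : Type*) [Group G] [Fintype G]
    (g : G) (hg : orderOf g = 5) (hcard : Fintype.card G = 5) :
    IsUnit (5 : ZMod (2 ^ r)) ∧
    ∀ x : MonoidAlgebra (ZMod (2 ^ r)) G,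
      x = (1 - algebraMap (ZMod (2 ^ r)) (MonoidAlgebra (ZMod (2 ^ r)) G)
              (3 * (5 : ZMod (2 ^ r))⁻¹))
            * (1 + MonoidAlgebra.of (ZMod (2 ^ r)) G g
                + MonoidAlgebra.of (ZMod (2 ^ r)) G g ^ 2
                + MonoidAlgebra.of (ZMod (2 ^ r)) G g ^ 3
                + MonoidAlgebra.of (ZMod (2 ^ r)) G g ^ 4) - 1 →
      x ^ 2 = 1 ∧ x ≠ 1 ∧ ∃ v : (MonoidAlgebra (ZMod (2 ^ r)) G)ˣ,
        (v : MonoidAlgebra (ZMod (2 ^ r)) G) = x ∧ orderOf v = 2 :=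
  order_two_unit_Z2rC5_general r hr G g hg
end

section
/- Let p be a prime, r ≥ 1 an integer, and G a group. Let e ∈ Z_{p^r}G be a central element whose reduction modulo p is an idempotent of F_pG, and let n ≥ 1 be an integer such that (e² − e)^n = 0 (such n exists, e.g. n = r). Then the element ω := (Σ_{k=1}^{n} (−1)^{k−1} · C(n,k) · e^k)^n, where C(n,k) is the binomial coefficient, is a central idempotent of Z_{p^r}G (that is, ω² = ω and ω is central), and the reduction of ω modulo p equals the reduction of e modulo p. -/
/-!
By the binomial theorem the inner sum is `1 - (1 - e) ^ n`, so `ω = (1 - (1 - e) ^ n) ^ n` is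
`1` minus the standard lift `1 - (1 - x ^ n) ^ n` of an idempotent at `x = 1 - e`, whose defect
`x - x ^ 2 = e - e ^ 2` is nilpotent. Modulo `p` both `e` and `1 - e` are idempotent, so all the
powers collapse and `ω` reduces to `e`; centrality is inherited from `e`.
-/

open Finset

section

variable {R : Type*} [Ring R]

theorem sum_Icc_one_neg_one_pow_choose_mul_pow (x : R) (n : ℕ) :
    ∑ k ∈ Icc 1 n, (-1 : R) ^ (k - 1) * (n.choose k : R) * x ^ k = 1 - (1 - x) ^ n := by
  have h := (Commute.one_right (-x)).add_pow n
  rw [← sub_eq_neg_add, Nat.range_succ_eq_Icc_zero, ← insert_Icc_succ_left_eq_Icc (Nat.zero_le n),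
    sum_insert (by simp)] at h
  rw [h, Nat.succ_eq_succ, Nat.succ_eq_add_one, zero_add, pow_zero, one_pow, Nat.choose_zero_right,
    Nat.cast_one, one_mul, mul_one, sub_add_cancel_left, ← sum_neg_distrib]
  refine sum_congr rfl fun k hk => ?_
  obtain ⟨j, rfl⟩ := Nat.exists_eq_add_of_le' (mem_Icc.mp hk).1
  rw [add_tsub_cancel_right, one_pow, mul_one, neg_pow x, pow_succ (-1 : R), mul_neg_one, neg_mul,
    neg_mul, neg_neg, mul_assoc, mul_assoc, Nat.cast_comm]

theorem isIdempotentElem_pow_one_sub_one_sub_pow {x : R} {n : ℕ} (h : (x ^ 2 - x) ^ n = 0) :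
    IsIdempotentElem ((1 - (1 - x) ^ n) ^ n) := by
  have h' : ((1 - x) - (1 - x) ^ 2) ^ n = 0 := by
    rw [show (1 - x) - (1 - x) ^ 2 = -(x ^ 2 - x) by noncomm_ring, neg_pow, h, mul_zero]
  simpa using (isIdempotentElem_one_sub_one_sub_pow_pow (1 - x) n h').one_sub

theorem IsIdempotentElem.pow_one_sub_one_sub_pow {f : R} (hf : IsIdempotentElem f) {n : ℕ}
    (hn : n ≠ 0) : (1 - (1 - f) ^ n) ^ n = f := by
  rw [hf.one_sub.pow_eq hn, sub_sub_cancel, hf.pow_eq hn]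

end

theorem central_idempotent_lift_general (p r : ℕ) (hr : 1 ≤ r)
    (G : Type*) [Group G] (e : MonoidAlgebra (ZMod (p ^ r)) G)
    (hcentral : ∀ y : MonoidAlgebra (ZMod (p ^ r)) G, e * y = y * e)
    (hidem : IsIdempotentElem (modpReduction p r (Nat.one_le_iff_ne_zero.mp hr) G e))
    (n : ℕ) (hn : 1 ≤ n) (hnil : (e ^ 2 - e) ^ n = 0) :
    IsIdempotentElem
        ((∑ k ∈ Finset.Icc 1 n,
            (-1 : MonoidAlgebra (ZMod (p ^ r)) G) ^ (k - 1) * (n.choose k : MonoidAlgebra (ZMod (p ^ r)) G) * e ^ k) ^ n) ∧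
      (∀ y : MonoidAlgebra (ZMod (p ^ r)) G,
        (∑ k ∈ Finset.Icc 1 n,
            (-1 : MonoidAlgebra (ZMod (p ^ r)) G) ^ (k - 1) * (n.choose k : MonoidAlgebra (ZMod (p ^ r)) G) * e ^ k) ^ n * y
          = y * (∑ k ∈ Finset.Icc 1 n,
            (-1 : MonoidAlgebra (ZMod (p ^ r)) G) ^ (k - 1) * (n.choose k : MonoidAlgebra (ZMod (p ^ r)) G) * e ^ k) ^ n) ∧
      modpReduction p r (Nat.one_le_iff_ne_zero.mp hr) G
          ((∑ k ∈ Finset.Icc 1 n,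
            (-1 : MonoidAlgebra (ZMod (p ^ r)) G) ^ (k - 1) * (n.choose k : MonoidAlgebra (ZMod (p ^ r)) G) * e ^ k) ^ n)
        = modpReduction p r (Nat.one_le_iff_ne_zero.mp hr) G e := by
  rw [sum_Icc_one_neg_one_pow_choose_mul_pow]
  have he : e ∈ Subring.center _ := Subring.mem_center_iff.mpr fun y => (hcentral y).symm
  have hω : (1 - (1 - e) ^ n) ^ n ∈ Subring.center _ :=
    pow_mem (sub_mem (one_mem _) (pow_mem (sub_mem (one_mem _) he) n)) n
  refine ⟨isIdempotentElem_pow_one_sub_one_sub_pow hnil,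
    fun y => (Subring.mem_center_iff.mp hω y).symm, ?_⟩
  simp only [map_pow, map_sub, map_one]
  exact hidem.pow_one_sub_one_sub_pow (Nat.one_le_iff_ne_zero.mp hn)

/-- lifting a central idempotent modulo `p`.  If `e` is central in
`Z_{p^r}G`, its reduction mod `p` is idempotent, and `(e^2 - e)^n = 0` for some
`n ≥ 1`, then `ω = (∑_{k=1}^n (-1)^(k-1) C(n,k) e^k)^n` is a central idempotent of
`Z_{p^r}G` whose reduction mod `p` equals that of `e`. -/
theorem central_idempotent_lift (p r : ℕ) [Fact p.Prime] (hr : 1 ≤ r)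
    (G : Type*) [Group G] (e : MonoidAlgebra (ZMod (p ^ r)) G)
    (hcentral : ∀ y : MonoidAlgebra (ZMod (p ^ r)) G, e * y = y * e)
    (hidem : IsIdempotentElem (modpReduction p r (Nat.one_le_iff_ne_zero.mp hr) G e))
    (n : ℕ) (hn : 1 ≤ n) (hnil : (e ^ 2 - e) ^ n = 0) :
    IsIdempotentElem
        ((∑ k ∈ Finset.Icc 1 n,
            (-1 : MonoidAlgebra (ZMod (p ^ r)) G) ^ (k - 1) * (n.choose k : MonoidAlgebra (ZMod (p ^ r)) G) * e ^ k) ^ n) ∧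
      (∀ y : MonoidAlgebra (ZMod (p ^ r)) G,
        (∑ k ∈ Finset.Icc 1 n,
            (-1 : MonoidAlgebra (ZMod (p ^ r)) G) ^ (k - 1) * (n.choose k : MonoidAlgebra (ZMod (p ^ r)) G) * e ^ k) ^ n * y
          = y * (∑ k ∈ Finset.Icc 1 n,
            (-1 : MonoidAlgebra (ZMod (p ^ r)) G) ^ (k - 1) * (n.choose k : MonoidAlgebra (ZMod (p ^ r)) G) * e ^ k) ^ n) ∧
      modpReduction p r (Nat.one_le_iff_ne_zero.mp hr) G
          ((∑ k ∈ Finset.Icc 1 n,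
            (-1 : MonoidAlgebra (ZMod (p ^ r)) G) ^ (k - 1) * (n.choose k : MonoidAlgebra (ZMod (p ^ r)) G) * e ^ k) ^ n)
        = modpReduction p r (Nat.one_le_iff_ne_zero.mp hr) G e :=
  central_idempotent_lift_general p r hr G e hcentral hidem n hn hnil
end

section
/- Let R be a commutative ring, G a group, and e an idempotent of the group algebra RG. Let C := {g ∈ G : g⁻¹ e g = e}, the stabilizer of e under conjugation by group elements, which is a subgroup of G. Suppose that (g⁻¹ e g) · e = 0 for every g ∈ G not in C. Then e·(RG)·e = (RC)·e, that is: for every x ∈ RG there is an element y in the image of the natural embedding of the group algebra RC into RG such that e·x·e = y·e, and conversely y·e = e·(y·e)·e for every such y (so every element of (RC)·e lies in e·(RG)·e). -/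
/-!
Since `g⁻¹ e g = e` for `g ∈ C`, the idempotent `e` commutes with `C`, hence with all of `RC`;
this gives `(RC)·e ⊆ e·(RG)·e`. Conversely `e g e = g (g⁻¹ e g) e` vanishes for `g ∉ C`
and equals `g e` for `g ∈ C`, so by linearity `e x e` is `y e`, where `y` is the part of `x`
supported on `C`.
-/

namespace MonoidAlgebra

variable {R G : Type*} [Group G]

section Semiring

variable [Semiring R]

theorem of_mul_conj (g : G) (x : MonoidAlgebra R G) :
    of R G g * (of R G g⁻¹ * x * of R G g) = x * of R G g := by
  rw [← mul_assoc, ← mul_assoc, ← map_mul, mul_inv_cancel, map_one, one_mul]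

theorem commute_of_of_conj_eq {g : G} {x : MonoidAlgebra R G}
    (h : of R G g⁻¹ * x * of R G g = x) : Commute x (of R G g) := by
  rw [Commute, SemiconjBy, ← of_mul_conj, h]

theorem mul_of_mul_eq_zero_of_conj_mul_eq_zero {g : G} {e : MonoidAlgebra R G}
    (h : of R G g⁻¹ * e * of R G g * e = 0) : e * of R G g * e = 0 := by
  rw [← of_mul_conj, mul_assoc, h, mul_zero]

theorem mapDomainRingHom_of {M N : Type*} [Monoid M] [Monoid N] (f : M →* N) (m : M) :
    mapDomainRingHom R f (of R M m) = of R N (f m) := by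
  simp [mapDomainRingHom_apply, mapDomain_single]

theorem mapDomainRingHom_smul {M N : Type*} [Monoid M] [Monoid N] (f : M →* N) (r : R)
    (x : MonoidAlgebra R M) : mapDomainRingHom R f (r • x) = r • mapDomainRingHom R f x :=
  mapDomain_smul f r x

end Semiring

section CommSemiring

variable [CommSemiring R]

theorem commute_mapDomainRingHom_subtype {C : Subgroup G} {e : MonoidAlgebra R G}
    (hcomm : ∀ g ∈ C, Commute e (of R G g)) (y : MonoidAlgebra R C) :
    Commute e (mapDomainRingHom R C.subtype y) := by
  induction y using induction_on with
  | of c => simpa only [mapDomainRingHom_of, C.subtype_apply] using hcomm c c.2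
  | add y z hy hz => simpa only [map_add] using hy.add_right hz
  | smul r y hy => simpa only [mapDomainRingHom_smul] using hy.smul_right r

theorem exists_mul_mul_eq_mapDomainRingHom_subtype_mul {C : Subgroup G}
    {e : MonoidAlgebra R G} (he : IsIdempotentElem e)
    (hcomm : ∀ g ∈ C, Commute e (of R G g)) (hzero : ∀ g ∉ C, e * of R G g * e = 0)
    (x : MonoidAlgebra R G) :
    ∃ y : MonoidAlgebra R C, e * x * e = mapDomainRingHom R C.subtype y * e := by
  induction x using induction_on with
  | of g =>
    by_cases hg : g ∈ C
    · refine ⟨of R C ⟨g, hg⟩, ?_⟩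
      rw [mapDomainRingHom_of, (hcomm g hg).eq, mul_assoc, he.eq, C.subtype_apply]
    · exact ⟨0, by rw [hzero g hg, map_zero, zero_mul]⟩
  | add x z hx hz =>
    obtain ⟨y, hy⟩ := hx
    obtain ⟨w, hw⟩ := hz
    exact ⟨y + w, by rw [mul_add, add_mul, hy, hw, map_add, add_mul]⟩
  | smul r x hx =>
    obtain ⟨y, hy⟩ := hx
    refine ⟨r • y, ?_⟩
    rw [mul_smul_comm, smul_mul_assoc, hy, mapDomainRingHom_smul, smul_mul_assoc]

end CommSemiring

end MonoidAlgebra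

open MonoidAlgebra in
/-- let `e` be an idempotent of `RG` and `C` its conjugation
stabilizer in `G`.  If `(g⁻¹ e g) · e = 0` for every `g ∉ C`, then
`e·(RG)·e = (RC)·e`. -/
theorem corner_eq_stabilizer_groupRing (R : Type*) [CommRing R]
    (G : Type*) [Group G] (e : MonoidAlgebra R G) (he : e * e = e)
    (C : Subgroup G)
    (hC : ∀ g : G, g ∈ C ↔
      MonoidAlgebra.of R G g⁻¹ * e * MonoidAlgebra.of R G g = e)
    (horth : ∀ g : G, g ∉ C →
      (MonoidAlgebra.of R G g⁻¹ * e * MonoidAlgebra.of R G g) * e = 0) :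
    (∀ x : MonoidAlgebra R G, ∃ y : MonoidAlgebra R C,
      e * x * e = MonoidAlgebra.mapDomainRingHom R C.subtype y * e) ∧
    (∀ y : MonoidAlgebra R C,
      MonoidAlgebra.mapDomainRingHom R C.subtype y * e
        = e * (MonoidAlgebra.mapDomainRingHom R C.subtype y * e) * e) := by
  have hcomm : ∀ g ∈ C, Commute e (of R G g) := fun g hg ↦ commute_of_of_conj_eq ((hC g).1 hg)
  have hzero : ∀ g ∉ C, e * of R G g * e = 0 := fun g hg ↦
    mul_of_mul_eq_zero_of_conj_mul_eq_zero (horth g hg)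
  refine ⟨exists_mul_mul_eq_mapDomainRingHom_subtype_mul he hcomm hzero, fun y ↦ ?_⟩
  rw [← mul_assoc, (commute_mapDomainRingHom_subtype hcomm y).eq, mul_assoc, he, mul_assoc, he]
end

section
/- Let R be a commutative ring, G a finite group, and e an idempotent of the group algebra RG. Let C := {g ∈ G : g⁻¹ e g = e}, the stabilizer of e under conjugation by group elements, which is a subgroup of G, and suppose that (g⁻¹ e g) · e = 0 for every g ∈ G not in C. Let T be a right transversal of C in G. Then the element f := Σ_{t ∈ T} t⁻¹ e t is a central idempotent of RG, i.e., f² = f and f commutes with every element of RG. -/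
/-!
The conjugates `t⁻¹ e t`, `t ∈ T`, are idempotents, and two distinct ones are orthogonal because
`s t⁻¹ ∉ C`; hence their sum `f` is idempotent. Since `t⁻¹ e t` only depends on the coset `Ct`
and right multiplication by `g` permutes the right cosets of `C`, conjugation by `g` permutes the
summands of `f`. So `f` commutes with every group element, hence with all of `RG`.
-/

namespace Subgroup

variable {G : Type*} [Group G] {H : Subgroup G}

theorem IsComplement.toRightFun_eq {T : Set G} (hT : IsComplement H T) {g t : G}
    (ht : t ∈ T) (hg : g * t⁻¹ ∈ H) : (hT.toRightFun g : G) = t :=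
  congrArg Subtype.val <| (isComplement_iff_existsUnique_mul_inv_mem.mp hT g).unique
    (hT.mul_inv_toRightFun_mem g) (y₂ := ⟨t, ht⟩) hg

theorem IsComplement.eq_of_mul_inv_mem {T : Set G} (hT : IsComplement H T) {s t : G}
    (hs : s ∈ T) (ht : t ∈ T) (hst : s * t⁻¹ ∈ H) : s = t := by
  rw [← hT.toRightFun_eq ht hst, hT.toRightFun_eq hs (by simp)]

theorem isComplement_of_existsUnique_mul_inv_mem {T : Set G}
    (hT : ∀ x : G, ∃! t, t ∈ T ∧ x * t⁻¹ ∈ H) : IsComplement H T := by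
  refine isComplement_iff_existsUnique_mul_inv_mem.mpr fun x ↦ ?_
  obtain ⟨t, ⟨ht, hxt⟩, huniq⟩ := hT x
  exact ⟨⟨t, ht⟩, hxt, fun s hs ↦ Subtype.ext (huniq s ⟨s.2, hs⟩)⟩

variable {M : Type*} {F : G → M}

theorem IsComplement.apply_toRightFun {T : Set G} (hT : IsComplement H T)
    (hF : ∀ h ∈ H, ∀ x, F (h * x) = F x) (g : G) : F (hT.toRightFun g) = F g := by
  simpa using (hF _ (hT.mul_inv_toRightFun_mem g) (hT.toRightFun g)).symm

theorem IsComplement.toRightFun_toRightFun_mul_inv {T : Set G} (hT : IsComplement H T)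
    {t : G} (ht : t ∈ T) (g : G) : (hT.toRightFun (hT.toRightFun (t * g) * g⁻¹) : G) = t := by
  refine hT.toRightFun_eq ht ?_
  simpa [mul_assoc] using hT.toRightFun_mul_inv_mem (t * g)

theorem IsComplement.sum_mul_right [AddCommMonoid M] {T : Finset G}
    (hT : IsComplement H (T : Set G))
    (hF : ∀ h ∈ H, ∀ x, F (h * x) = F x) (g : G) :
    ∑ t ∈ T, F (t * g) = ∑ t ∈ T, F t := by
  refine Finset.sum_nbij' (fun t ↦ hT.toRightFun (t * g)) (fun t ↦ hT.toRightFun (t * g⁻¹))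
    (fun t _ ↦ (hT.toRightFun _).2) (fun t _ ↦ (hT.toRightFun _).2)
    (fun t ht ↦ hT.toRightFun_toRightFun_mul_inv ht g)
    (fun t ht ↦ by simpa using hT.toRightFun_toRightFun_mul_inv ht g⁻¹)
    (fun t _ ↦ (hT.apply_toRightFun hF _).symm)

end Subgroup

namespace MonoidHom

variable {A : Type*} [Semiring A] {G : Type*} [Group G] (ρ : G →* A)

def conjBy (g : G) (a : A) : A := ρ g⁻¹ * a * ρ g

variable {ρ}

theorem conjBy_conjBy (g h : G) (a : A) : ρ.conjBy h (ρ.conjBy g a) = ρ.conjBy (g * h) a := by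
  simp only [conjBy, mul_inv_rev, map_mul, mul_assoc]

theorem conjBy_mul_conjBy (g : G) (a b : A) :
    ρ.conjBy g a * ρ.conjBy g b = ρ.conjBy g (a * b) := by
  simp only [conjBy, mul_assoc]
  rw [← mul_assoc (ρ g), map_mul_eq_one ρ (mul_inv_cancel g), one_mul]

theorem conjBy_zero (g : G) : ρ.conjBy g (0 : A) = 0 := by
  simp [conjBy]

theorem conjBy_sum {ι : Type*} (s : Finset ι) (a : ι → A) (g : G) :
    ρ.conjBy g (∑ i ∈ s, a i) = ∑ i ∈ s, ρ.conjBy g (a i) := by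
  simp only [conjBy, Finset.mul_sum, Finset.sum_mul]

theorem isIdempotentElem_conjBy {a : A} (ha : IsIdempotentElem a) (g : G) :
    IsIdempotentElem (ρ.conjBy g a) := by
  rw [IsIdempotentElem, conjBy_mul_conjBy, ha.eq]

theorem conjBy_mul_eq_of_conjBy_eq {a : A} {g : G} (hg : ρ.conjBy g a = a) (x : G) :
    ρ.conjBy (g * x) a = ρ.conjBy x a := by
  rw [← conjBy_conjBy, hg]

theorem conjBy_mul_conjBy_eq_zero {a : A} {s t : G} (hst : ρ.conjBy (s * t⁻¹) a * a = 0) :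
    ρ.conjBy s a * ρ.conjBy t a = 0 := by
  rw [← inv_mul_cancel_right s t, ← conjBy_conjBy, conjBy_mul_conjBy, hst, conjBy_zero]

theorem commute_of_conjBy_eq {a : A} {g : G} (hg : ρ.conjBy g a = a) : Commute a (ρ g) := by
  change a * ρ g = ρ g * a
  nth_rw 2 [← hg]
  rw [conjBy, ← mul_assoc, ← mul_assoc, map_mul_eq_one ρ (mul_inv_cancel g), one_mul]

end MonoidHom

theorem MonoidAlgebra.commute_of_forall_commute_of {k G : Type*} [CommSemiring k] [Monoid G]
    {a : MonoidAlgebra k G} (ha : ∀ g, Commute a (of k G g)) (x : MonoidAlgebra k G) :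
    Commute a x := by
  induction x using MonoidAlgebra.induction_on with
  | of g => exact ha g
  | add x y hx hy => exact hx.add_right hy
  | smul r x hx => exact hx.smul_right r

theorem sum_conjugates_central_idempotent_general (R : Type*) [CommRing R]
    (G : Type*) [Group G]
    (e : MonoidAlgebra R G) (he : e * e = e)
    (C : Subgroup G)
    (hC : ∀ g : G, g ∈ C ↔
      MonoidAlgebra.of R G g⁻¹ * e * MonoidAlgebra.of R G g = e)
    (horth : ∀ g : G, g ∉ C →
      (MonoidAlgebra.of R G g⁻¹ * e * MonoidAlgebra.of R G g) * e = 0)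
    (T : Finset G)
    (hT : ∀ x : G, ∃! t, t ∈ T ∧ x * t⁻¹ ∈ C) :
    (∑ t ∈ T, MonoidAlgebra.of R G t⁻¹ * e * MonoidAlgebra.of R G t)
        * (∑ t ∈ T, MonoidAlgebra.of R G t⁻¹ * e * MonoidAlgebra.of R G t)
      = (∑ t ∈ T, MonoidAlgebra.of R G t⁻¹ * e * MonoidAlgebra.of R G t) ∧
    ∀ x : MonoidAlgebra R G,
      (∑ t ∈ T, MonoidAlgebra.of R G t⁻¹ * e * MonoidAlgebra.of R G t) * x
        = x * (∑ t ∈ T, MonoidAlgebra.of R G t⁻¹ * e * MonoidAlgebra.of R G t) := by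
  let ρ := MonoidAlgebra.of R G
  have hT' : Subgroup.IsComplement C (T : Set G) :=
    Subgroup.isComplement_of_existsUnique_mul_inv_mem hT
  have horthogonal : OrthogonalIdempotents fun t : T ↦ ρ.conjBy t e :=
    ⟨fun t ↦ MonoidHom.isIdempotentElem_conjBy (ρ := ρ) he t, fun s t hst ↦
      MonoidHom.conjBy_mul_conjBy_eq_zero <|
        horth _ fun h ↦ hst <| Subtype.ext <| hT'.eq_of_mul_inv_mem s.2 t.2 h⟩
  have hinvariant (g : G) : ρ.conjBy g (∑ t ∈ T, ρ.conjBy t e) = ∑ t ∈ T, ρ.conjBy t e := by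
    simp only [MonoidHom.conjBy_sum, MonoidHom.conjBy_conjBy]
    exact hT'.sum_mul_right (F := (ρ.conjBy · e))
      (fun c hc ↦ MonoidHom.conjBy_mul_eq_of_conjBy_eq ((hC c).1 hc)) g
  have hidempotent := horthogonal.isIdempotentElem_sum (s := Finset.univ)
  rw [Finset.sum_coe_sort T (ρ.conjBy · e)] at hidempotent
  exact ⟨hidempotent.eq, MonoidAlgebra.commute_of_forall_commute_of fun g ↦
    MonoidHom.commute_of_conjBy_eq (hinvariant g)⟩

/-- let `e` be an idempotent of `RG`, `C` its conjugation
stabilizer in `G`, and suppose distinct conjugates of `e` are orthogonal to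
`e`.  If `T` is a right transversal of `C` in `G`, then
`f = ∑_{t ∈ T} t⁻¹ e t` is a central idempotent of `RG`. -/
theorem sum_conjugates_central_idempotent (R : Type*) [CommRing R]
    (G : Type*) [Group G] [Fintype G]
    (e : MonoidAlgebra R G) (he : e * e = e)
    (C : Subgroup G)
    (hC : ∀ g : G, g ∈ C ↔
      MonoidAlgebra.of R G g⁻¹ * e * MonoidAlgebra.of R G g = e)
    (horth : ∀ g : G, g ∉ C →
      (MonoidAlgebra.of R G g⁻¹ * e * MonoidAlgebra.of R G g) * e = 0)
    (T : Finset G)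
    (hT : ∀ x : G, ∃! t, t ∈ T ∧ x * t⁻¹ ∈ C) :
    (∑ t ∈ T, MonoidAlgebra.of R G t⁻¹ * e * MonoidAlgebra.of R G t)
        * (∑ t ∈ T, MonoidAlgebra.of R G t⁻¹ * e * MonoidAlgebra.of R G t)
      = (∑ t ∈ T, MonoidAlgebra.of R G t⁻¹ * e * MonoidAlgebra.of R G t) ∧
    ∀ x : MonoidAlgebra R G,
      (∑ t ∈ T, MonoidAlgebra.of R G t⁻¹ * e * MonoidAlgebra.of R G t) * x
        = x * (∑ t ∈ T, MonoidAlgebra.of R G t⁻¹ * e * MonoidAlgebra.of R G t) :=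
  sum_conjugates_central_idempotent_general R G e he C hC horth T hT
end
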